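/- arXiv:1811.01366 — 5 statements merged into one kernel-verified Lean document; each statement's English description precedes it below -/
import Mathlib

section
/- Let (Ω, F, (F_t)_{t≥0}, P) be a filtered probability space and let Z = (Z_t)_{t≥0} be a real-valued adapted stochastic process with càdlàg sample paths. Fix ε > 0, h > 0 and a non-decreasing function ψ : [0, h] → [0, ∞), and assume that for every bounded stopping time σ and every h' ∈ [0, h], P(|Z_{σ+h'} − Z_σ| > ε | F_σ) ≤ ψ(h') holds P-almost surely. Then for every bounded stopping time σ one has, P-almost surely, P( sup_{h' ∈ [0, h]} |Z_{σ+h'} − Z_σ| > 2ε | F_σ ) ≤ 2 ψ(h). -/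
open MeasureTheory Filter Set

theorem cadlag_bdd {f : ℝ → ℝ}
    (hr : ∀ t, ContinuousWithinAt f (Ici t) t)
    (hl : ∀ t, ∃ l : ℝ, Tendsto f (nhdsWithin t (Iio t)) (nhds l))
    (a b : ℝ) : ∃ M : ℝ, ∀ t ∈ Icc a b, |f t| ≤ M := by
  have key : ∀ t : ℝ, ∃ M : ℝ, ∀ᶠ s in nhds t, |f s| ≤ M := by
    intro t
    obtain ⟨l, hlt⟩ := hl t
    have h1 : ∀ᶠ s in nhdsWithin t (Iio t), |f s| ≤ max (|l| + 1) (|f t| + 1) := by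
      filter_upwards [Metric.tendsto_nhds.mp hlt 1 one_pos] with s hs
      have : |f s - l| < 1 := by simpa [Real.dist_eq] using hs
      have : |f s| ≤ |l| + 1 := by
        have := abs_sub_abs_le_abs_sub (f s) l
        linarith
      exact this.trans (le_max_left _ _)
    have h2 : ∀ᶠ s in nhdsWithin t (Ici t), |f s| ≤ max (|l| + 1) (|f t| + 1) := by
      filter_upwards [Metric.tendsto_nhds.mp (hr t) 1 one_pos] with s hs
      have : |f s - f t| < 1 := by simpa [Real.dist_eq] using hs
      have : |f s| ≤ |f t| + 1 := by
        have := abs_sub_abs_le_abs_sub (f s) (f t)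
        linarith
      exact this.trans (le_max_right _ _)
    refine ⟨max (|l| + 1) (|f t| + 1), ?_⟩
    rw [← nhdsLT_sup_nhdsGE t]
    exact eventually_sup.mpr ⟨h1, h2⟩
  choose M hM using key
  obtain ⟨s, -, hcover⟩ := isCompact_Icc.elim_nhds_subcover
    (fun t => {u | |f u| ≤ M t}) (fun x _ => hM x)
  obtain ⟨M0, hM0⟩ := (s.image M).exists_le
  refine ⟨M0, fun t ht => ?_⟩
  obtain ⟨x, hx, hfx⟩ := Set.mem_iUnion₂.mp (hcover ht)
  exact hfx.trans (hM0 _ (Finset.mem_image_of_mem M hx))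

theorem adapted_progMeasurable {Ω : Type*} {m0 : MeasurableSpace Ω} (F : Filtration ℝ m0)
    (Z : ℝ → Ω → ℝ) (hadapted : Adapted F Z)
    (hr : ∀ ω t, ContinuousWithinAt (fun s => Z s ω) (Ici t) t) :
    ProgMeasurable F Z := by
  intro i
  set g : ℕ → ℝ → ℝ := fun n t => i - (⌊(i - t) * 2 ^ n⌋₊ : ℝ) / 2 ^ n with hg
  have hgle : ∀ n (t : ℝ), t ≤ i → t ≤ g n t ∧ g n t ≤ t + (1 / 2 : ℝ) ^ n := by
    intro n t ht
    have h2n : (0:ℝ) < 2 ^ n := by positivity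
    constructor
    · have h0 := Nat.floor_le (by nlinarith : (0:ℝ) ≤ (i - t) * 2 ^ n)
      have h3 : (⌊(i - t) * 2 ^ n⌋₊ : ℝ) / 2 ^ n ≤ i - t := by
        rw [div_le_iff₀ h2n]; linarith
      show t ≤ i - (⌊(i - t) * 2 ^ n⌋₊ : ℝ) / 2 ^ n
      linarith
    · have h0 := Nat.lt_floor_add_one ((i - t) * 2 ^ n)
      have h1 : (1/2:ℝ)^n = 1 / 2^n := by rw [div_pow]; norm_num
      have h3 : i - t ≤ ((⌊(i - t) * 2 ^ n⌋₊ : ℝ) + 1) / 2 ^ n := by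
        rw [le_div_iff₀ h2n]; linarith
      have h4 : ((⌊(i - t) * 2 ^ n⌋₊ : ℝ) + 1) / 2 ^ n
          = (⌊(i - t) * 2 ^ n⌋₊ : ℝ) / 2 ^ n + 1 / 2 ^ n := by ring
      show i - (⌊(i - t) * 2 ^ n⌋₊ : ℝ) / 2 ^ n ≤ t + (1/2:ℝ)^n
      rw [h1]; linarith
  have hU : ∀ n, StronglyMeasurable[Subtype.instMeasurableSpace.prod (F i)]
      (fun p : Set.Iic i × Ω => Z (g n (p.1 : ℝ)) p.2) := by
    intro n
    have hmeas : @Measurable _ _ (Subtype.instMeasurableSpace.prod (F i)) _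
        (fun p : Set.Iic i × Ω => Z (g n (p.1 : ℝ)) p.2) := by
      intro B hB
      have hcover : (fun p : Set.Iic i × Ω => Z (g n (p.1 : ℝ)) p.2) ⁻¹' B =
          ⋃ k : ℕ, {p : Set.Iic i × Ω | g n (p.1 : ℝ) = i - (k : ℝ) / 2 ^ n} ∩
            {p : Set.Iic i × Ω | Z (i - (k : ℝ) / 2 ^ n) p.2 ∈ B} := by
        ext p
        simp only [Set.mem_preimage, Set.mem_iUnion, Set.mem_inter_iff, Set.mem_setOf_eq]
        constructor
        · intro hp
          exact ⟨⌊(i - (p.1 : ℝ)) * 2 ^ n⌋₊, rfl,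
            by rwa [show i - (((⌊(i - (p.1:ℝ)) * 2 ^ n⌋₊ : ℕ)) : ℝ) / 2 ^ n = g n (p.1 : ℝ) from rfl]⟩
        · rintro ⟨k, hk, hZ⟩
          rwa [hk]
      rw [hcover]
      apply MeasurableSet.iUnion
      intro k
      have hgm : Measurable (g n) := by
        apply Measurable.sub measurable_const
        apply Measurable.div_const
        exact measurable_from_top.comp (Nat.measurable_floor.comp
          ((measurable_const.sub measurable_id).mul_const _))
      have hk2 : i - (k : ℝ) / 2 ^ n ≤ i := by
        have : (0:ℝ) ≤ (k : ℝ) / 2 ^ n := by positivity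
        linarith
      exact MeasurableSet.inter
        ((hgm.comp (measurable_subtype_coe.comp measurable_fst)) (measurableSet_singleton _))
        (measurable_snd (((hadapted _).mono (F.mono hk2) le_rfl) hB))
    exact hmeas.stronglyMeasurable
  refine @stronglyMeasurable_of_tendsto (Set.Iic i × Ω) ℝ ℕ
    (MeasurableSpace.prod _ (F i)) _ _ atTop _ _
    (fun n (p : Set.Iic i × Ω) => Z (g n (p.1 : ℝ)) p.2) _ hU ?_
  rw [tendsto_pi_nhds]
  intro p
  have hp : (p.1 : ℝ) ≤ i := p.1.2
  have htend : Tendsto (fun n => g n (p.1 : ℝ)) atTop (nhdsWithin (p.1 : ℝ) (Ici (p.1 : ℝ))) := by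
    rw [tendsto_nhdsWithin_iff]
    constructor
    · have hub : Tendsto (fun n : ℕ => (p.1 : ℝ) + (1/2:ℝ)^n) atTop (nhds ((p.1:ℝ) + 0)) :=
        tendsto_const_nhds.add (tendsto_pow_atTop_nhds_zero_of_lt_one (by norm_num) (by norm_num))
      rw [add_zero] at hub
      exact tendsto_of_tendsto_of_tendsto_of_le_of_le tendsto_const_nhds hub
        (fun n => (hgle n _ hp).1) (fun n => (hgle n _ hp).2)
    · exact Filter.Eventually.of_forall fun n => (hgle n _ hp).1
  exact (hr p.2 (p.1 : ℝ)).tendsto.comp htend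

theorem meas_inter_le {Ω : Type*} {m : MeasurableSpace Ω} {m0 : MeasurableSpace Ω}
    (P : Measure Ω) [IsProbabilityMeasure P] (hm : m ≤ m0)
    {S H : Set Ω} (hS : MeasurableSet[m0] S) (hH : MeasurableSet[m] H)
    {c : ℝ} (hc : 0 ≤ c)
    (hcond : ∀ᵐ ω ∂P, (P[Set.indicator S (fun _ => (1:ℝ)) | m]) ω ≤ c) :
    P (S ∩ H) ≤ ENNReal.ofReal c * P H := by
  haveI : IsFiniteMeasure (P.trim hm) := isFiniteMeasure_trim hm
  have hint : Integrable (Set.indicator S fun _ => (1:ℝ)) P := (integrable_const 1).indicator hS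
  have h1 : ∫ ω in H, Set.indicator S (fun _ => (1:ℝ)) ω ∂P = (P (S ∩ H)).toReal := by
    rw [integral_indicator hS, setIntegral_const, measureReal_restrict_apply hS]
    simp [Measure.real]
  have h2 : ∫ ω in H, (P[Set.indicator S (fun _ => (1:ℝ)) | m]) ω ∂P = (P (S ∩ H)).toReal := by
    rw [setIntegral_condExp hm hint hH]; exact h1
  have h3 : (P (S ∩ H)).toReal ≤ c * (P H).toReal := by
    rw [← h2]
    calc ∫ ω in H, (P[Set.indicator S (fun _ => (1:ℝ)) | m]) ω ∂P
        ≤ ∫ _ω in H, c ∂P := by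
          apply integral_mono_ae integrable_condExp.integrableOn (integrable_const c).integrableOn
          exact ae_restrict_of_ae hcond
      _ = (P H).toReal * c := by rw [setIntegral_const]; simp [Measure.real]
      _ = c * (P H).toReal := by ring
  calc P (S ∩ H) = ENNReal.ofReal ((P (S ∩ H)).toReal) := by
        rw [ENNReal.ofReal_toReal (measure_ne_top _ _)]
    _ ≤ ENNReal.ofReal (c * (P H).toReal) := ENNReal.ofReal_le_ofReal h3
    _ = ENNReal.ofReal c * ENNReal.ofReal ((P H).toReal) := ENNReal.ofReal_mul hc
    _ = ENNReal.ofReal c * P H := by rw [ENNReal.ofReal_toReal (measure_ne_top _ _)]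

theorem condexp_le_of_meas_le {Ω : Type*} {m : MeasurableSpace Ω} {m0 : MeasurableSpace Ω}
    (P : Measure Ω) [IsProbabilityMeasure P] (hm : m ≤ m0)
    {T : Set Ω} (hT : MeasurableSet[m0] T) {c : ℝ} (hc : 0 ≤ c)
    (hbound : ∀ G : Set Ω, MeasurableSet[m] G → P (T ∩ G) ≤ ENNReal.ofReal c * P G) :
    ∀ᵐ ω ∂P, (P[Set.indicator T (fun _ => (1:ℝ)) | m]) ω ≤ c := by
  haveI : IsFiniteMeasure (P.trim hm) := isFiniteMeasure_trim hm
  have hint : Integrable (Set.indicator T fun _ => (1:ℝ)) P := (integrable_const 1).indicator hT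
  set g := P[Set.indicator T (fun _ => (1:ℝ)) | m] with hgdef
  have hgmeas : StronglyMeasurable[m] g := stronglyMeasurable_condExp
  have hfmeas : StronglyMeasurable[m] (fun ω => c - g ω) :=
    stronglyMeasurable_const.sub hgmeas
  have hfint : Integrable (fun ω => c - g ω) P := (integrable_const c).sub integrable_condExp
  have hftrim : Integrable (fun ω => c - g ω) (P.trim hm) := hfint.trim hm hfmeas
  have hnonneg : 0 ≤ᵐ[P.trim hm] fun ω => c - g ω := by
    apply ae_nonneg_of_forall_setIntegral_nonneg hftrim
    intro s hs _
    rw [← setIntegral_trim hm hfmeas hs]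
    have hseq : ∫ ω in s, g ω ∂P = (P (T ∩ s)).toReal := by
      rw [hgdef, setIntegral_condExp hm hint hs, integral_indicator hT, setIntegral_const,
        measureReal_restrict_apply hT]
      simp [Measure.real]
    have hPle : (P (T ∩ s)).toReal ≤ c * (P s).toReal := by
      have h1 := hbound s hs
      have h2 : (P (T ∩ s)).toReal ≤ (ENNReal.ofReal c * P s).toReal :=
        ENNReal.toReal_mono (ENNReal.mul_ne_top ENNReal.ofReal_ne_top (measure_ne_top _ _)) h1
      rwa [ENNReal.toReal_mul, ENNReal.toReal_ofReal hc] at h2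
    have : ∫ ω in s, (fun ω => c - g ω) ω ∂P = c * (P s).toReal - (P (T ∩ s)).toReal := by
      rw [integral_sub (integrable_const c).integrableOn integrable_condExp.integrableOn]
      rw [hseq, setIntegral_const]
      simp [mul_comm, Measure.real]
    rw [this]
    linarith
  have := ae_le_of_ae_le_trim (hm := hm) hnonneg
  filter_upwards [this] with ω hω
  have : (0:ℝ) ≤ c - g ω := hω
  linarith

theorem abs_sub_meas {Ω : Type*} {m : MeasurableSpace Ω} {f g : Ω → ℝ}
    (hf : Measurable f) (hg : Measurable g) (c : ℝ) :
    MeasurableSet[m] {ω | c < |f ω - g ω|} :=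
  (hf.sub hg).abs measurableSet_Ioi

/-- from conditional tail bounds at bounded stopping times with deterministic
shift, a bound on the conditional probability of a large running supremum after a bounded
stopping time. -/
theorem stmt2 {Ω : Type*} {m0 : MeasurableSpace Ω} (P : Measure Ω) [IsProbabilityMeasure P]
    (F : Filtration ℝ m0) (Z : ℝ → Ω → ℝ)
    (hadapted : Adapted F Z)
    (hcadlag_right : ∀ ω t, ContinuousWithinAt (fun s => Z s ω) (Ici t) t)
    (hcadlag_left : ∀ ω t, ∃ l : ℝ, Tendsto (fun s => Z s ω) (nhdsWithin t (Iio t)) (nhds l))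
    (ε : ℝ) (hε : 0 < ε) (h : ℝ) (hh : 0 < h)
    (ψ : ℝ → ℝ)
    (hψnonneg : ∀ h' ∈ Icc (0:ℝ) h, 0 ≤ ψ h')
    (hψmono : ∀ h1 ∈ Icc (0:ℝ) h, ∀ h2 ∈ Icc (0:ℝ) h, h1 ≤ h2 → ψ h1 ≤ ψ h2)
    (hyp : ∀ σ : Ω → ℝ, ∀ hσ : IsStoppingTime F (fun ω => (σ ω : WithTop ℝ)), (∃ M : ℝ, ∀ ω, σ ω ≤ M) →
      ∀ h' ∈ Icc (0:ℝ) h,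
        ∀ᵐ ω ∂P,
          (P[Set.indicator {ω' | ε < |Z (σ ω' + h') ω' - Z (σ ω') ω'|}
            (fun _ => (1:ℝ)) | hσ.measurableSpace]) ω ≤ ψ h') :
    ∀ σ : Ω → ℝ, ∀ hσ : IsStoppingTime F (fun ω => (σ ω : WithTop ℝ)), (∃ M : ℝ, ∀ ω, σ ω ≤ M) →
      ∀ᵐ ω ∂P,
        (P[Set.indicator
            {ω' | 2 * ε <
              sSup {a : ℝ | ∃ h', 0 ≤ h' ∧ h' ≤ h ∧ a = |Z (σ ω' + h') ω' - Z (σ ω') ω'|}}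
          (fun _ => (1:ℝ)) | hσ.measurableSpace]) ω ≤ 2 * ψ h := by
  classical
  intro σ hσ hbdd
  obtain ⟨M, hM⟩ := hbdd
  have hmle : hσ.measurableSpace ≤ m0 := hσ.measurableSpace_le
  have prog : ProgMeasurable F Z := adapted_progMeasurable F Z hadapted hcadlag_right
  have hstop : ∀ t : ℝ, 0 ≤ t → IsStoppingTime F (fun ω => ((σ ω + t : ℝ) : WithTop ℝ)) :=
    fun t ht => by have := hσ.add_const ht; simp only [← WithTop.coe_add] at this; exact this
  have hY : ∀ (t : ℝ) (ht : 0 ≤ t), Measurable[(hstop t ht).measurableSpace]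
      (fun ω => Z (σ ω + t) ω) := fun t ht => measurable_stoppedValue prog (hstop t ht)
  have hY0 : Measurable[hσ.measurableSpace] (fun ω => Z (σ ω) ω) :=
    measurable_stoppedValue prog hσ
  have hY0' : Measurable (fun ω => Z (σ ω) ω) := hY0.mono hmle le_rfl
  have hYm0 : ∀ (t : ℝ), 0 ≤ t → Measurable (fun ω => Z (σ ω + t) ω) :=
    fun t ht => (hY t ht).mono (hstop t ht).measurableSpace_le le_rfl
  set S : ℝ → Set Ω := fun t => {ω | 2 * ε < |Z (σ ω + t) ω - Z (σ ω) ω|} with hSdef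
  set T : Set Ω := {ω | 2 * ε <
      sSup {a : ℝ | ∃ h', 0 ≤ h' ∧ h' ≤ h ∧ a = |Z (σ ω + h') ω - Z (σ ω) ω|}} with hTdef
  have hSm : ∀ (t : ℝ), 0 ≤ t → MeasurableSet (S t) := fun t ht =>
    measurableSet_lt measurable_const ((hYm0 t ht).sub hY0').abs
  -- grid monotone σ-algebras
  have hσle : ∀ (t : ℝ) (ht : 0 ≤ t), hσ.measurableSpace ≤ (hstop t ht).measurableSpace :=
    fun t ht => hσ.measurableSpace_mono (hstop t ht) (fun ω => WithTop.coe_le_coe.mpr (le_add_of_nonneg_right ht))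
  have hmono_st : ∀ (s t : ℝ) (hs : 0 ≤ s) (ht : 0 ≤ t), s ≤ t →
      (hstop s hs).measurableSpace ≤ (hstop t ht).measurableSpace :=
    fun s t hs ht hst => (hstop s hs).measurableSpace_mono (hstop t ht)
      (fun ω => WithTop.coe_le_coe.mpr (by linarith))
  have hSστ : ∀ (t : ℝ) (ht : 0 ≤ t), MeasurableSet[(hstop t ht).measurableSpace] (S t) := by
    intro t ht
    have h2 : Measurable[(hstop t ht).measurableSpace] fun ω => Z (σ ω) ω :=
      hY0.mono (hσle t ht) le_rfl
    exact abs_sub_meas (hY t ht) h2 (2 * ε)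
  -- dyadic grid
  have hd0 : ∀ (n k : ℕ), (0:ℝ) ≤ k * h / 2 ^ n := by
    intro n k; positivity
  have hdle : ∀ (n k : ℕ), k ≤ 2 ^ n → (k : ℝ) * h / 2 ^ n ≤ h := by
    intro n k hk
    rw [div_le_iff₀ (by positivity)]
    have : (k : ℝ) ≤ 2 ^ n := by exact_mod_cast hk
    nlinarith
  set A : ℕ → Set Ω := fun n => ⋃ k ∈ Finset.range (2 ^ n + 1), S ((k : ℝ) * h / 2 ^ n)
    with hAdef
  have hAmeas : ∀ n, MeasurableSet (A n) :=
    fun n => Finset.measurableSet_biUnion _ (fun k _ => hSm _ (hd0 n k))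
  -- path boundedness
  have hpath : ∀ ω, BddAbove
      {a : ℝ | ∃ h', 0 ≤ h' ∧ h' ≤ h ∧ a = |Z (σ ω + h') ω - Z (σ ω) ω|} := by
    intro ω
    obtain ⟨Mb, hMb⟩ := cadlag_bdd (hcadlag_right ω) (hcadlag_left ω) (σ ω) (σ ω + h)
    refine ⟨Mb + Mb, ?_⟩
    rintro a ⟨h', h0, hh', rfl⟩
    have h1 := hMb (σ ω + h') ⟨by linarith, by linarith⟩
    have h2 := hMb (σ ω) ⟨le_refl _, by linarith⟩
    calc |Z (σ ω + h') ω - Z (σ ω) ω| ≤ |Z (σ ω + h') ω| + |Z (σ ω) ω| := abs_sub _ _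
      _ ≤ Mb + Mb := add_le_add h1 h2
  -- T = ⋃ n, A n
  have hTeq : T = ⋃ n, A n := by
    ext ω
    simp only [hTdef, Set.mem_setOf_eq, Set.mem_iUnion, hAdef, Finset.mem_range]
    constructor
    · intro hω
      have hne : {a : ℝ | ∃ h', 0 ≤ h' ∧ h' ≤ h ∧ a = |Z (σ ω + h') ω - Z (σ ω) ω|}.Nonempty :=
        ⟨|Z (σ ω + 0) ω - Z (σ ω) ω|, 0, le_refl 0, hh.le, rfl⟩
      obtain ⟨a, ⟨h', hh'0, hh'le, rfl⟩, ha⟩ := exists_lt_of_lt_csSup hne hω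
      -- right continuity at σ ω + h'
      set x := σ ω + h' with hxdef
      have hcont : ContinuousWithinAt (fun s => |Z s ω - Z (σ ω) ω|) (Ici x) x :=
        ((hcadlag_right ω x).sub continuousWithinAt_const).abs
      have hev : ∀ᶠ s in nhdsWithin x (Ici x), 2 * ε < |Z s ω - Z (σ ω) ω| :=
        hcont.eventually (eventually_gt_nhds ha)
      obtain ⟨δ, hδ, hball⟩ := Metric.mem_nhdsWithin_iff.mp hev
      by_cases hcase : h' = h
      · refine ⟨0, 1, by norm_num, ?_⟩
        have heq1 : ((1:ℕ):ℝ) * h / 2 ^ (0:ℕ) = h := by norm_num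
        rw [heq1]
        show 2 * ε < |Z (σ ω + h) ω - Z (σ ω) ω|
        apply hball
        constructor
        · rw [Metric.mem_ball, hxdef, hcase, dist_self]
          exact hδ
        · rw [hxdef, hcase]
          exact Set.self_mem_Ici
      · have hlt : h' < h := lt_of_le_of_ne hh'le hcase
        obtain ⟨n, hn⟩ := pow_unbounded_of_one_lt (h / min δ (h - h')) (by norm_num : (1:ℝ) < 2)
        have hmin : 0 < min δ (h - h') := lt_min hδ (by linarith)
        have hstep : h / 2 ^ n < min δ (h - h') := by
          rw [div_lt_iff₀ (by positivity : (0:ℝ) < 2 ^ n), mul_comm]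
          rw [div_lt_iff₀ hmin] at hn
          linarith
        set k := ⌈h' * 2 ^ n / h⌉₊ with hkdef
        have hk1 : h' * 2 ^ n / h ≤ (k : ℝ) := Nat.le_ceil _
        have hk2 : (k : ℝ) < h' * 2 ^ n / h + 1 :=
          Nat.ceil_lt_add_one (by positivity)
        have ht1 : h' ≤ (k : ℝ) * h / 2 ^ n := by
          rw [le_div_iff₀ (by positivity)]
          rw [div_le_iff₀ hh] at hk1
          linarith
        have hq : h' * 2 ^ n / h * h = h' * 2 ^ n := div_mul_cancel₀ _ hh.ne'
        have ht2 : (k : ℝ) * h / 2 ^ n < h' + h / 2 ^ n := by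
          have h2n : (0:ℝ) < 2 ^ n := by positivity
          rw [div_lt_iff₀ h2n]
          have hk2h : (k:ℝ) * h < (h' * 2 ^ n / h + 1) * h := mul_lt_mul_of_pos_right hk2 hh
          have hq2 : h / 2 ^ n * 2 ^ n = h := div_mul_cancel₀ _ (ne_of_gt h2n)
          nlinarith [hk2h, hq, hq2]
        have htlth : (k : ℝ) * h / 2 ^ n < h := by
          have := hstep.trans_le (min_le_right _ _)
          linarith
        have hkle : k ≤ 2 ^ n := by
          by_contra hcon
          push_neg at hcon
          have : (2:ℝ) ^ n + 1 ≤ (k:ℝ) := by exact_mod_cast hcon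
          have h2n : (0:ℝ) < 2 ^ n := by positivity
          rw [div_lt_iff₀ h2n] at htlth
          nlinarith
        refine ⟨n, k, by omega, ?_⟩
        show 2 * ε < |Z (σ ω + (k : ℝ) * h / 2 ^ n) ω - Z (σ ω) ω|
        apply hball
        constructor
        · rw [Metric.mem_ball, Real.dist_eq, hxdef]
          have hd : h / 2 ^ n < δ := hstep.trans_le (min_le_left _ _)
          rw [abs_of_nonneg (by linarith)]
          linarith
        · show x ≤ σ ω + (k : ℝ) * h / 2 ^ n
          rw [hxdef]
          linarith
    · rintro ⟨n, k, hk, hω⟩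
      have hk' : k ≤ 2 ^ n := by omega
      apply lt_of_lt_of_le hω
      apply le_csSup (hpath ω)
      exact ⟨(k : ℝ) * h / 2 ^ n, hd0 n k, hdle n k hk', rfl⟩
  -- A monotone
  have hAmono : Monotone A := by
    apply monotone_nat_of_le_succ
    intro n ω hω
    simp only [hAdef, Set.mem_iUnion, Finset.mem_range] at hω ⊢
    obtain ⟨k, hk, hω⟩ := hω
    refine ⟨2 * k, by omega, ?_⟩
    have : ((2 * k : ℕ) : ℝ) * h / 2 ^ (n + 1) = (k : ℝ) * h / 2 ^ n := by
      push_cast; ring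
    rw [this]
    exact hω
  -- key bound on finite grids
  have hψh : 0 ≤ ψ h := hψnonneg h ⟨hh.le, le_refl h⟩
  have key : ∀ (n : ℕ) (G : Set Ω), MeasurableSet[hσ.measurableSpace] G →
      P (A n ∩ G) ≤ ENNReal.ofReal (2 * ψ h) * P G := by
    intro n G hG
    have hGm0 : MeasurableSet G := hmle G hG
    set B : Set Ω := {ω | ε < |Z (σ ω + h) ω - Z (σ ω) ω|} with hBdef
    have hBmeas : MeasurableSet B :=
      measurableSet_lt measurable_const ((hYm0 h hh.le).sub hY0').abs
    have hBbound : P (B ∩ G) ≤ ENNReal.ofReal (ψ h) * P G := by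
      have hcond := hyp σ hσ ⟨M, hM⟩ h ⟨hh.le, le_refl h⟩
      exact meas_inter_le P hmle hBmeas hG hψh hcond
    set C : ℕ → Set Ω := fun k =>
      S ((k : ℝ) * h / 2 ^ n) ∩ ⋂ j ∈ Finset.range k, (S ((j : ℝ) * h / 2 ^ n))ᶜ with hCdef
    have hCm0 : ∀ k, MeasurableSet (C k) := fun k =>
      (hSm _ (hd0 n k)).inter
        (Finset.measurableSet_biInter _ (fun j _ => (hSm _ (hd0 n j)).compl))
    -- C k ∩ G measurable in F_{σ + d n k}
    have hCρ : ∀ k : ℕ, MeasurableSet[(hstop ((k : ℝ) * h / 2 ^ n) (hd0 n k)).measurableSpace]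
        (C k ∩ G) := by
      intro k
      apply MeasurableSet.inter
      · apply MeasurableSet.inter (hSστ _ (hd0 n k))
        apply Finset.measurableSet_biInter
        intro j hj
        have hjk : (j : ℝ) * h / 2 ^ n ≤ (k : ℝ) * h / 2 ^ n := by
          have hjle : (j : ℝ) ≤ (k : ℝ) := by
            exact_mod_cast (Finset.mem_range.mp hj).le
          gcongr
        exact (hmono_st _ _ (hd0 n j) (hd0 n k) hjk) _ (hSστ _ (hd0 n j)).compl
      · exact (hσle _ (hd0 n k)) G hG
    -- hyp bound for each k
    have hEk : ∀ k : ℕ, k ≤ 2 ^ n →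
        P ({ω' | ε < |Z ((σ ω' + (k : ℝ) * h / 2 ^ n) + (h - (k : ℝ) * h / 2 ^ n)) ω'
            - Z (σ ω' + (k : ℝ) * h / 2 ^ n) ω'|} ∩ (C k ∩ G))
          ≤ ENNReal.ofReal (ψ h) * P (C k ∩ G) := by
      intro k hk
      have hdk0 := hd0 n k
      have hdkh := hdle n k hk
      have hcond := hyp (fun ω => σ ω + (k : ℝ) * h / 2 ^ n) (hstop _ hdk0)
        ⟨M + (k : ℝ) * h / 2 ^ n, fun ω => by linarith [hM ω]⟩
        (h - (k : ℝ) * h / 2 ^ n) ⟨by linarith, by linarith⟩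
      have hEmeas : MeasurableSet {ω' | ε <
          |Z ((σ ω' + (k : ℝ) * h / 2 ^ n) + (h - (k : ℝ) * h / 2 ^ n)) ω'
            - Z (σ ω' + (k : ℝ) * h / 2 ^ n) ω'|} := by
        have harr : ∀ ω : Ω, (σ ω + (k : ℝ) * h / 2 ^ n) + (h - (k : ℝ) * h / 2 ^ n)
            = σ ω + h := fun ω => by ring
        simp_rw [harr]
        exact measurableSet_lt measurable_const
          ((hYm0 h hh.le).sub (hYm0 _ hdk0)).abs
      have hb := meas_inter_le P (hstop _ hdk0).measurableSpace_le hEmeas (hCρ k)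
        (hψnonneg _ ⟨by linarith, by linarith⟩) hcond
      refine hb.trans ?_
      apply mul_le_mul_left
      apply ENNReal.ofReal_le_ofReal
      exact hψmono _ ⟨by linarith, by linarith⟩ h ⟨hh.le, le_refl h⟩ (by linarith)
    -- inclusion C k ∩ G ∩ Bᶜ ⊆ E k
    have hincl : ∀ k, C k ∩ G ∩ Bᶜ ⊆
        {ω' | ε < |Z ((σ ω' + (k : ℝ) * h / 2 ^ n) + (h - (k : ℝ) * h / 2 ^ n)) ω'
          - Z (σ ω' + (k : ℝ) * h / 2 ^ n) ω'|} ∩ (C k ∩ G) := by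
      rintro k ω ⟨⟨hC, hG'⟩, hB⟩
      refine ⟨?_, hC, hG'⟩
      have h1 : 2 * ε < |Z (σ ω + (k : ℝ) * h / 2 ^ n) ω - Z (σ ω) ω| := hC.1
      have h2 : ¬ (ε < |Z (σ ω + h) ω - Z (σ ω) ω|) := hB
      push_neg at h2
      show ε < |Z ((σ ω + (k : ℝ) * h / 2 ^ n) + (h - (k : ℝ) * h / 2 ^ n)) ω
          - Z (σ ω + (k : ℝ) * h / 2 ^ n) ω|
      have harr : (σ ω + (k : ℝ) * h / 2 ^ n) + (h - (k : ℝ) * h / 2 ^ n) = σ ω + h := by ring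
      rw [harr]
      set u := Z (σ ω + h) ω - Z (σ ω) ω with hu
      set v := Z (σ ω + (k : ℝ) * h / 2 ^ n) ω - Z (σ ω) ω with hv
      have heq : Z (σ ω + h) ω - Z (σ ω + (k : ℝ) * h / 2 ^ n) ω = u - v := by
        rw [hu, hv]; ring
      rw [heq]
      have h3 : |v| - |u| ≤ |v - u| := abs_sub_abs_le_abs_sub v u
      rw [abs_sub_comm u v]
      linarith
    -- disjointness of the C k
    have hdisj2 : ∀ j k : ℕ, j < k → Disjoint (C j ∩ G) (C k ∩ G) := by
      intro j k hlt
      apply Set.disjoint_left.mpr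
      rintro ω ⟨hωj, _⟩ ⟨hωk, _⟩
      have := Set.mem_iInter₂.mp hωk.2 j (Finset.mem_range.mpr hlt)
      exact this hωj.1
    have hCdisj : Set.PairwiseDisjoint (↑(Finset.range (2 ^ n + 1))) (fun k => C k ∩ G) := by
      intro j _ k _ hjk
      rcases lt_or_gt_of_ne hjk with hlt | hlt
      · exact hdisj2 j k hlt
      · exact (hdisj2 k j hlt).symm
    -- sum bound
    have hsum : ∑ k ∈ Finset.range (2 ^ n + 1), P (C k ∩ G) ≤ P G := by
      rw [← measure_biUnion_finset hCdisj (fun k _ => (hCm0 k).inter hGm0)]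
      apply measure_mono
      intro ω hω
      simp only [Set.mem_iUnion] at hω
      obtain ⟨k, _, _, hωG⟩ := hω
      exact hωG
    -- decomposition
    have hdecomp : A n ∩ G ⊆ (B ∩ G) ∪ ⋃ k ∈ Finset.range (2 ^ n + 1), (C k ∩ G ∩ Bᶜ) := by
      rintro ω ⟨hA, hG'⟩
      by_cases hB : ω ∈ B
      · exact Or.inl ⟨hB, hG'⟩
      right
      simp only [hAdef, Set.mem_iUnion, Finset.mem_range] at hA
      obtain ⟨k0, hk0, hωk0⟩ := hA
      have hex : ∃ k : ℕ, ω ∈ S ((k : ℝ) * h / 2 ^ n) := ⟨k0, hωk0⟩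
      set k := Nat.find hex with hkdef
      have hkle : k ≤ k0 := Nat.find_min' hex hωk0
      simp only [Set.mem_iUnion, Finset.mem_range]
      refine ⟨k, by omega, ⟨⟨Nat.find_spec hex, ?_⟩, hG'⟩, hB⟩
      apply Set.mem_iInter₂.mpr
      intro j hj
      exact Nat.find_min hex (Finset.mem_range.mp hj)
    -- put it together
    calc P (A n ∩ G)
        ≤ P ((B ∩ G) ∪ ⋃ k ∈ Finset.range (2 ^ n + 1), (C k ∩ G ∩ Bᶜ)) :=
          measure_mono hdecomp
      _ ≤ P (B ∩ G) + P (⋃ k ∈ Finset.range (2 ^ n + 1), (C k ∩ G ∩ Bᶜ)) :=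
          measure_union_le _ _
      _ ≤ P (B ∩ G) + ∑ k ∈ Finset.range (2 ^ n + 1), P (C k ∩ G ∩ Bᶜ) := by
          gcongr
          exact measure_biUnion_finset_le _ _
      _ ≤ ENNReal.ofReal (ψ h) * P G
          + ∑ k ∈ Finset.range (2 ^ n + 1), ENNReal.ofReal (ψ h) * P (C k ∩ G) := by
          gcongr with k hk
          exact le_trans (measure_mono (hincl k)) (hEk k (by
            simpa using Nat.lt_succ_iff.mp (Finset.mem_range.mp hk)))
      _ = ENNReal.ofReal (ψ h) * P G
          + ENNReal.ofReal (ψ h) * ∑ k ∈ Finset.range (2 ^ n + 1), P (C k ∩ G) := by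
          rw [Finset.mul_sum]
      _ ≤ ENNReal.ofReal (ψ h) * P G + ENNReal.ofReal (ψ h) * P G := by
          gcongr
      _ = ENNReal.ofReal (2 * ψ h) * P G := by
          rw [two_mul, ENNReal.ofReal_add hψh hψh, add_mul]
  -- assemble
  have hTmeas : MeasurableSet T := by
    rw [hTeq]; exact MeasurableSet.iUnion hAmeas
  have hTbound : ∀ G : Set Ω, MeasurableSet[hσ.measurableSpace] G →
      P (T ∩ G) ≤ ENNReal.ofReal (2 * ψ h) * P G := by
    intro G hG
    rw [hTeq, Set.iUnion_inter]
    have hmono2 : Monotone (fun n => A n ∩ G) :=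
      fun i j hij => Set.inter_subset_inter_left G (hAmono hij)
    rw [hmono2.directed_le.measure_iUnion]
    exact iSup_le fun n => key n G hG
  exact condexp_le_of_meas_le P hmle hTmeas (by positivity) hTbound
end

section
/- Let τ_1, …, τ_k be non-negative real random variables on a probability space (Ω, F, P) (no independence is assumed). Let δ > 0, T > 0 and p ∈ [0, 1] be such that δk > T and P(τ_ℓ ≤ δ) ≤ p for every ℓ ∈ {1, …, k}. Then P( τ_1 + ⋯ + τ_k ≤ T ) ≤ (δk / (δk − T)) · p. -/
/-!
On the event `∑ ℓ, τ ℓ ≤ T`, fewer than `T / δ` of the `τ ℓ` can exceed `δ`, so at least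
`c = (δ k - T) / δ` of the events `{τ ℓ ≤ δ}` occur. Markov's inequality for the number of
occurring events then gives `c · P (∑ ℓ, τ ℓ ≤ T) ≤ ∑ ℓ, P (τ ℓ ≤ δ) ≤ k p`.
-/

open MeasureTheory Set ENNReal Finset

theorem Finset.mul_card_filter_lt_le_sum {ι : Type*} (s : Finset ι) {x : ι → ℝ}
    (hx : ∀ i ∈ s, 0 ≤ x i) (δ : ℝ) :
    δ * #{i ∈ s | δ < x i} ≤ ∑ i ∈ s, x i := by
  calc δ * #{i ∈ s | δ < x i} = #{i ∈ s | δ < x i} • δ := by rw [nsmul_eq_mul, mul_comm]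
    _ ≤ ∑ i ∈ s with δ < x i, x i := card_nsmul_le_sum _ _ _ fun i hi ↦ (mem_filter.1 hi).2.le
    _ ≤ ∑ i ∈ s, x i :=
        sum_le_sum_of_subset_of_nonneg (filter_subset _ _) fun i hi _ ↦ hx i hi

theorem Finset.mul_card_sub_le_mul_card_filter_le {ι : Type*} (s : Finset ι) {x : ι → ℝ}
    (hx : ∀ i ∈ s, 0 ≤ x i) {δ T : ℝ} (hT : ∑ i ∈ s, x i ≤ T) :
    δ * #s - T ≤ δ * #{i ∈ s | x i ≤ δ} := by
  have hcard : (#{i ∈ s | x i ≤ δ} : ℝ) + #{i ∈ s | δ < x i} = #s := by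
    simp_rw [← not_le]
    exact_mod_cast card_filter_add_card_filter_not (fun i ↦ x i ≤ δ)
  rw [← hcard, mul_add]
  linarith [s.mul_card_filter_lt_le_sum hx δ]

open Classical in
theorem MeasureTheory.mul_measure_le_sum_measure_of_le_card {Ω ι : Type*} [MeasurableSpace Ω]
    [Fintype ι] (μ : Measure Ω) {A : ι → Set Ω} (hA : ∀ i, MeasurableSet (A i)) {B : Set Ω}
    {c : ℝ≥0∞} (hB : ∀ ω ∈ B, c ≤ #{i | ω ∈ A i}) :
    c * μ B ≤ ∑ i, μ (A i) := by
  set N : Ω → ℝ≥0∞ := fun ω ↦ ∑ i, (A i).indicator 1 ω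
  have hN : ∀ ω, N ω = #{i | ω ∈ A i} := fun ω ↦ by
    simp only [N, indicator_apply, Pi.one_apply, sum_boole]
  have hNmeas : Measurable N :=
    Finset.measurable_sum _ fun i _ ↦ measurable_one.indicator (hA i)
  calc c * μ B ≤ c * μ {ω | c ≤ N ω} := by
        gcongr
        intro ω hω
        simpa [hN] using hB ω hω
    _ ≤ ∫⁻ ω, N ω ∂μ := mul_meas_ge_le_lintegral hNmeas c
    _ = ∑ i, μ (A i) := by
        simp only [N]
        rw [lintegral_finsetSum _ fun i _ ↦ measurable_one.indicator (hA i)]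
        simp_rw [lintegral_indicator_one (hA _)]

theorem stmt3_general {Ω : Type*} [MeasurableSpace Ω] (P : Measure Ω) [IsProbabilityMeasure P]
    (k : ℕ) (τ : Fin k → Ω → ℝ)
    (hmeas : ∀ ℓ, Measurable (τ ℓ))
    (hnonneg : ∀ ℓ ω, 0 ≤ τ ℓ ω)
    (δ T p : ℝ) (hδ : 0 < δ)
    (hδk : T < δ * k)
    (htail : ∀ ℓ, P {ω | τ ℓ ω ≤ δ} ≤ ENNReal.ofReal p) :
    P {ω | (∑ ℓ, τ ℓ ω) ≤ T} ≤ ENNReal.ofReal ((δ * k / (δ * k - T)) * p) := by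
  classical
  set c := (δ * k - T) / δ
  have hc : 0 < c := div_pos (by linarith) hδ
  have hcount : ∀ ω ∈ {ω | ∑ ℓ, τ ℓ ω ≤ T}, ENNReal.ofReal c ≤ #{ℓ | ω ∈ {ω | τ ℓ ω ≤ δ}} :=
    fun ω hω ↦ by
      rw [← ofReal_natCast]
      refine ofReal_le_ofReal ((div_le_iff₀' hδ).2 ?_)
      simpa using univ.mul_card_sub_le_mul_card_filter_le (fun ℓ _ ↦ hnonneg ℓ ω) hω
  have hmarkov := mul_measure_le_sum_measure_of_le_card P
    (fun ℓ ↦ measurableSet_le (hmeas ℓ) measurable_const) hcount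
  have hsum : ∑ ℓ, P {ω | τ ℓ ω ≤ δ} ≤ k * ENNReal.ofReal p := by
    simpa using sum_le_sum fun ℓ (_ : ℓ ∈ Finset.univ) ↦ htail ℓ
  have hbound : ENNReal.ofReal c * ENNReal.ofReal ((δ * k / (δ * k - T)) * p) =
      k * ENNReal.ofReal p := by
    have hgap : δ * k - T ≠ 0 := by linarith
    rw [← ofReal_mul hc.le, ← ofReal_natCast, ← ofReal_mul (Nat.cast_nonneg k)]
    congr 1
    simp only [c]
    field_simp
  refine (ENNReal.mul_le_mul_iff_right (ofReal_pos.2 hc).ne' ofReal_ne_top).1 ?_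
  rw [hbound]
  exact hmarkov.trans hsum

/-- tail bound for a sum of non-negative random variables. -/
theorem stmt3 {Ω : Type*} [MeasurableSpace Ω] (P : Measure Ω) [IsProbabilityMeasure P]
    (k : ℕ) (hk : 0 < k) (τ : Fin k → Ω → ℝ)
    (hmeas : ∀ ℓ, Measurable (τ ℓ))
    (hnonneg : ∀ ℓ ω, 0 ≤ τ ℓ ω)
    (δ T p : ℝ) (hδ : 0 < δ) (hT : 0 < T) (hp : p ∈ Icc (0:ℝ) 1)
    (hδk : T < δ * k)
    (htail : ∀ ℓ, P {ω | τ ℓ ω ≤ δ} ≤ ENNReal.ofReal p) :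
    P {ω | (∑ ℓ, τ ℓ ω) ≤ T} ≤ ENNReal.ofReal ((δ * k / (δ * k - T)) * p) :=
  stmt3_general P k τ hmeas hnonneg δ T p hδ hδk htail
end

section
/- Let d ≥ 1, let Σ be a real symmetric positive-definite d×d matrix, and let G : ℝ^d → ℝ be continuous with 0 ≤ G(u) ≤ H(u) for all u ∈ ℝ^d, for some Schwartz function H ∈ S(ℝ^d). Then for every T > 0 there exists a constant C > 0 such that sup_{t ∈ [0, T]} S_t^Σ G(u) ≤ C / (1 + |u|^{2d}) for all u ∈ ℝ^d, where |·| is the Euclidean norm. -/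
/-! Since `Σ⁻¹` is positive definite, `⟨w, Σ⁻¹ w⟩ ≥ λ‖w‖²`, so for `0 < t ≤ T` the heat kernel is
at most `exp (-λ‖w‖²/(4T)) · exp (-λ‖w‖²/(4t))`. The first factor absorbs the weight
`(1 + ‖w‖)ⁿ` uniformly in `t`; Peetre's inequality `1 + ‖u‖ ≤ (1 + ‖v‖)(1 + ‖u - v‖)` moves the
weight from `u` onto `G`, which is dominated by a Schwartz function; the second factor, against
the normalisation `((2πt)^d det Σ)^{-1/2}`, integrates to a constant independent of `t`. -/

open MeasureTheory Set

/-- The quadratic form `w ↦ ⟨w, A w⟩ = ∑_i ∑_j w_i A_{ij} w_j`. -/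
noncomputable def quadForm {d : ℕ} (A : Matrix (Fin d) (Fin d) ℝ)
    (w : EuclideanSpace ℝ (Fin d)) : ℝ :=
  ∑ i, ∑ j, w i * A i j * w j

/-- The Gaussian heat semigroup `S_t^Σ` with covariance matrix `S`: `S_0^Σ G = G` and, for
`t > 0`, `S_t^Σ G(u) = ((2πt)^d det S)^{-1/2} ∫ G(v) exp(-⟨u-v, S⁻¹(u-v)⟩/(2t)) dv`. -/
noncomputable def heatSG {d : ℕ} (S : Matrix (Fin d) (Fin d) ℝ) (t : ℝ)
    (G : EuclideanSpace ℝ (Fin d) → ℝ) (u : EuclideanSpace ℝ (Fin d)) : ℝ :=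
  if t = 0 then G u
  else (Real.sqrt ((2 * Real.pi * t) ^ d * S.det))⁻¹ *
    ∫ v, G v * Real.exp (-(quadForm S⁻¹ (u - v)) / (2 * t))

open Real Nat

section QuadForm

variable {d : ℕ}

lemma quadForm_smul (A : Matrix (Fin d) (Fin d) ℝ) (c : ℝ) (w : EuclideanSpace ℝ (Fin d)) :
    quadForm A (c • w) = c ^ 2 * quadForm A w := by
  simp only [quadForm, Finset.mul_sum, PiLp.smul_apply, smul_eq_mul]
  exact Finset.sum_congr rfl fun i _ => Finset.sum_congr rfl fun j _ => by ring

lemma continuous_quadForm (A : Matrix (Fin d) (Fin d) ℝ) : Continuous (quadForm A) := by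
  unfold quadForm
  fun_prop

lemma Matrix.PosDef.quadForm_pos {A : Matrix (Fin d) (Fin d) ℝ} (hA : A.PosDef)
    {w : EuclideanSpace ℝ (Fin d)} (hw : w ≠ 0) : 0 < quadForm A w := by
  have hw' : (fun i => w i) ≠ 0 := fun h => hw (by ext i; exact congrFun h i)
  simpa [quadForm, dotProduct, Matrix.mulVec, Finset.mul_sum, mul_assoc]
    using hA.re_dotProduct_pos hw'

lemma Matrix.PosDef.exists_mul_sq_norm_le_quadForm {A : Matrix (Fin d) (Fin d) ℝ}
    (hA : A.PosDef) : ∃ lam > 0, ∀ w, lam * ‖w‖ ^ 2 ≤ quadForm A w := by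
  rcases subsingleton_or_nontrivial (EuclideanSpace ℝ (Fin d)) with hE | hE
  · exact ⟨1, one_pos, fun w => by simp [Subsingleton.elim w 0, quadForm]⟩
  obtain ⟨w₀, hw₀, hmin⟩ := (isCompact_sphere (0 : EuclideanSpace ℝ (Fin d)) 1).exists_isMinOn
    (NormedSpace.sphere_nonempty.2 zero_le_one) (continuous_quadForm A).continuousOn
  have hw₀0 : w₀ ≠ 0 := ne_zero_of_mem_unit_sphere ⟨w₀, hw₀⟩
  refine ⟨quadForm A w₀, hA.quadForm_pos hw₀0, fun w => ?_⟩
  rcases eq_or_ne w 0 with rfl | hw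
  · simp [quadForm]
  have hn : 0 < ‖w‖ := norm_pos_iff.2 hw
  have hmem : ‖w‖⁻¹ • w ∈ Metric.sphere (0 : EuclideanSpace ℝ (Fin d)) 1 := by
    simp [norm_smul, hn.ne']
  have h : quadForm A w₀ ≤ quadForm A (‖w‖⁻¹ • w) := hmin hmem
  rwa [quadForm_smul, inv_pow, ← div_eq_inv_mul, le_div_iff₀ (by positivity)] at h

end QuadForm

lemma one_add_norm_le_mul_one_add_norm_sub {E : Type*} [SeminormedAddCommGroup E] (u v : E) :
    1 + ‖u‖ ≤ (1 + ‖v‖) * (1 + ‖u - v‖) := by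
  nlinarith [norm_le_norm_add_norm_sub' u v, mul_nonneg (norm_nonneg v) (norm_nonneg (u - v))]

lemma one_add_pow_le_two_mul_one_add_pow (n : ℕ) {x : ℝ} (hx : 0 ≤ x) :
    1 + x ^ n ≤ 2 * (1 + x) ^ n := by
  have h1 : 1 ≤ (1 + x) ^ n := one_le_pow₀ (by linarith)
  have h2 : x ^ n ≤ (1 + x) ^ n := pow_le_pow_left₀ hx (by linarith) n
  linarith

lemma one_add_pow_mul_exp_neg_le (n : ℕ) {x : ℝ} (hx : 0 ≤ x) :
    (1 + x) ^ n * exp (-x) ≤ n ! * exp 1 := by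
  have h := pow_div_factorial_le_exp (x := 1 + x) (by linarith) n
  rw [div_le_iff₀ (by positivity)] at h
  calc (1 + x) ^ n * exp (-x) ≤ exp (1 + x) * n ! * exp (-x) := by gcongr
    _ = n ! * exp 1 := by rw [mul_right_comm, ← exp_add]; ring_nf

lemma one_add_pow_mul_exp_neg_mul_sq_le (n : ℕ) {c y : ℝ} (hc : 0 < c) (hy : 0 ≤ y) :
    (1 + y) ^ n * exp (-(c * y ^ 2)) ≤ (2 * (1 + c⁻¹)) ^ n * (n ! * exp 1) := by
  have hcy : 0 ≤ c * y ^ 2 := by positivity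
  have hbase : 1 + y ≤ 2 * (1 + c⁻¹) * (1 + c * y ^ 2) := by
    have : c⁻¹ * (c * y ^ 2) = y ^ 2 := by field_simp
    nlinarith [inv_pos.2 hc, sq_nonneg (y - 1)]
  calc (1 + y) ^ n * exp (-(c * y ^ 2))
      ≤ (2 * (1 + c⁻¹) * (1 + c * y ^ 2)) ^ n * exp (-(c * y ^ 2)) := by gcongr
    _ = (2 * (1 + c⁻¹)) ^ n * ((1 + c * y ^ 2) ^ n * exp (-(c * y ^ 2))) := by
      rw [mul_pow, mul_assoc]
    _ ≤ (2 * (1 + c⁻¹)) ^ n * (n ! * exp 1) :=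
      mul_le_mul_of_nonneg_left (one_add_pow_mul_exp_neg_le n hcy) (by positivity)

section Gaussian

variable {d : ℕ}

lemma integrable_exp_neg_mul_sq_norm_sub {b : ℝ} (hb : 0 < b) (u : EuclideanSpace ℝ (Fin d)) :
    Integrable fun v : EuclideanSpace ℝ (Fin d) => exp (-b * ‖u - v‖ ^ 2) := by
  have h : Integrable fun v : EuclideanSpace ℝ (Fin d) => exp (-b * ‖v‖ ^ 2) := by
    simpa [Complex.norm_exp, ← Complex.ofReal_pow] using
      (GaussianFourier.integrable_cexp_neg_mul_sq_norm_add (V := EuclideanSpace ℝ (Fin d))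
        (b := (b : ℂ)) (by simpa using hb) 0 0).norm
  exact h.comp_sub_left u

lemma integral_exp_neg_mul_sq_norm_sub {b : ℝ} (hb : 0 < b) (u : EuclideanSpace ℝ (Fin d)) :
    ∫ v : EuclideanSpace ℝ (Fin d), exp (-b * ‖u - v‖ ^ 2) = (π / b) ^ ((d : ℝ) / 2) := by
  rw [integral_sub_left_eq_self (fun v => exp (-b * ‖v‖ ^ 2)) volume u,
    GaussianFourier.integral_rexp_neg_mul_sq_norm hb, finrank_euclideanSpace_fin]

lemma inv_sqrt_mul_rpow_eq {D lam t : ℝ} (hlam : 0 < lam) (ht : 0 < t) :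
    (√((2 * π * t) ^ d * D))⁻¹ * (π / (lam / (4 * t))) ^ ((d : ℝ) / 2)
      = (2 / lam) ^ ((d : ℝ) / 2) / √D := by
  have h2pt : 0 < 2 * π * t := by positivity
  have hsqrt : √((2 * π * t) ^ d) = (2 * π * t) ^ ((d : ℝ) / 2) := by
    rw [sqrt_eq_rpow, ← rpow_natCast, ← rpow_mul h2pt.le, mul_one_div]
  have hpi : π / (lam / (4 * t)) = 2 * π * t * (2 / lam) := by field_simp; ring
  have hpos : 0 < (2 * π * t) ^ ((d : ℝ) / 2) := rpow_pos_of_pos h2pt _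
  rw [sqrt_mul (by positivity), hsqrt, hpi, mul_rpow h2pt.le (by positivity)]
  field_simp

end Gaussian

lemma exp_neg_quadForm_div_le {d : ℕ} {A : Matrix (Fin d) (Fin d) ℝ} {lam c t : ℝ}
    (hQ : ∀ w, lam * ‖w‖ ^ 2 ≤ quadForm A w) (ht : 0 < t) (hct : c ≤ lam / (4 * t))
    (w : EuclideanSpace ℝ (Fin d)) :
    exp (-quadForm A w / (2 * t)) ≤ exp (-(c * ‖w‖ ^ 2)) * exp (-(lam / (4 * t)) * ‖w‖ ^ 2) := by
  rw [← exp_add, exp_le_exp, div_le_iff₀ (by positivity)]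
  have hlam : lam = 4 * t * (lam / (4 * t)) := by field_simp
  nlinarith [hQ w, mul_le_mul_of_nonneg_right hct (sq_nonneg ‖w‖)]

section HeatSemigroup

variable {d : ℕ} {S : Matrix (Fin d) (Fin d) ℝ} {G : EuclideanSpace ℝ (Fin d) → ℝ}

lemma heatSG_nonneg (hG : ∀ v, 0 ≤ G v) (t : ℝ) (u : EuclideanSpace ℝ (Fin d)) :
    0 ≤ heatSG S t G u := by
  unfold heatSG
  split_ifs
  · exact hG u
  · exact mul_nonneg (by positivity) (integral_nonneg fun v => mul_nonneg (hG v) (exp_pos _).le)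

lemma one_add_norm_pow_mul_heatSG_le {n : ℕ} {M K lam c t : ℝ} (hG : ∀ v, 0 ≤ G v)
    (hM : ∀ v, (1 + ‖v‖) ^ n * G v ≤ M) (hlam : 0 < lam)
    (hQ : ∀ w, lam * ‖w‖ ^ 2 ≤ quadForm S⁻¹ w)
    (hK : ∀ y, 0 ≤ y → (1 + y) ^ n * exp (-(c * y ^ 2)) ≤ K)
    (ht : 0 < t) (hct : c ≤ lam / (4 * t)) (u : EuclideanSpace ℝ (Fin d)) :
    (1 + ‖u‖) ^ n * heatSG S t G u ≤ M * K * ((2 / lam) ^ ((d : ℝ) / 2) / √S.det) := by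
  set b := lam / (4 * t)
  have hb : 0 < b := by positivity
  have hM0 : 0 ≤ M := le_trans (by have := hG 0; positivity) (hM 0)
  have hpoint : ∀ v, (1 + ‖u‖) ^ n * (G v * exp (-quadForm S⁻¹ (u - v) / (2 * t)))
      ≤ M * K * exp (-b * ‖u - v‖ ^ 2) := by
    intro v
    calc (1 + ‖u‖) ^ n * (G v * exp (-quadForm S⁻¹ (u - v) / (2 * t)))
        ≤ ((1 + ‖v‖) * (1 + ‖u - v‖)) ^ n
            * (G v * (exp (-(c * ‖u - v‖ ^ 2)) * exp (-b * ‖u - v‖ ^ 2))) := by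
          have := hG v
          exact mul_le_mul
            (pow_le_pow_left₀ (by positivity) (one_add_norm_le_mul_one_add_norm_sub u v) n)
            (mul_le_mul_of_nonneg_left (exp_neg_quadForm_div_le hQ ht hct _) this) (by positivity) (by positivity)
      _ = ((1 + ‖v‖) ^ n * G v) * ((1 + ‖u - v‖) ^ n * exp (-(c * ‖u - v‖ ^ 2)))
            * exp (-b * ‖u - v‖ ^ 2) := by rw [mul_pow]; ring
      _ ≤ M * K * exp (-b * ‖u - v‖ ^ 2) := by
          gcongr
          · exact hM v
          · exact hK _ (norm_nonneg _)
  have hint : (1 + ‖u‖) ^ n * ∫ v, G v * exp (-quadForm S⁻¹ (u - v) / (2 * t))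
      ≤ M * K * (π / b) ^ ((d : ℝ) / 2) := by
    rw [← integral_const_mul, ← integral_exp_neg_mul_sq_norm_sub hb u, ← integral_const_mul]
    refine integral_mono_of_nonneg (Filter.Eventually.of_forall fun v => ?_)
      ((integrable_exp_neg_mul_sq_norm_sub hb u).const_mul _)
      (Filter.Eventually.of_forall hpoint)
    have := hG v
    positivity
  set p := (√((2 * π * t) ^ d * S.det))⁻¹
  rw [heatSG, if_neg ht.ne', ← inv_sqrt_mul_rpow_eq (D := S.det) hlam ht]
  calc (1 + ‖u‖) ^ n * (p * ∫ v, G v * exp (-quadForm S⁻¹ (u - v) / (2 * t)))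
      = p * ((1 + ‖u‖) ^ n * ∫ v, G v * exp (-quadForm S⁻¹ (u - v) / (2 * t))) := by ring
    _ ≤ p * (M * K * (π / b) ^ ((d : ℝ) / 2)) := by gcongr
    _ = M * K * (p * (π / b) ^ ((d : ℝ) / 2)) := by ring

theorem exists_one_add_norm_pow_mul_heatSG_le (hS : S.PosDef) (hG : ∀ v, 0 ≤ G v) (n : ℕ)
    {M : ℝ} (hM : ∀ v, (1 + ‖v‖) ^ n * G v ≤ M) {T : ℝ} (hT : 0 < T) :
    ∃ C, ∀ t ∈ Icc 0 T, ∀ u, (1 + ‖u‖) ^ n * heatSG S t G u ≤ C := by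
  obtain ⟨lam, hlam, hQ⟩ := hS.inv.exists_mul_sq_norm_le_quadForm
  have hc : 0 < lam / (4 * T) := by positivity
  refine ⟨max M (M * ((2 * (1 + (lam / (4 * T))⁻¹)) ^ n * (n ! * exp 1))
    * ((2 / lam) ^ ((d : ℝ) / 2) / √S.det)), fun t ⟨ht0, htT⟩ u => ?_⟩
  rcases ht0.eq_or_lt with rfl | ht
  · rw [heatSG, if_pos rfl]
    exact (hM u).trans (le_max_left _ _)
  · refine le_trans ?_ (le_max_right _ _)
    exact one_add_norm_pow_mul_heatSG_le hG hM hlam hQ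
      (fun y hy => one_add_pow_mul_exp_neg_mul_sq_le n hc hy) ht (by gcongr) u

end HeatSemigroup

theorem stmt5_general (d : ℕ) (S : Matrix (Fin d) (Fin d) ℝ) (hS : S.PosDef)
    (G : EuclideanSpace ℝ (Fin d) → ℝ)
    (H : SchwartzMap (EuclideanSpace ℝ (Fin d)) ℝ)
    (hGH : ∀ u, 0 ≤ G u ∧ G u ≤ H u)
    (T : ℝ) (hT : 0 < T) :
    ∃ C > 0, ∀ t ∈ Icc (0:ℝ) T, ∀ u, heatSG S t G u ≤ C / (1 + ‖u‖ ^ (2 * d)) := by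
  have hG : ∀ v, 0 ≤ G v := fun v => (hGH v).1
  have hM : ∀ v, (1 + ‖v‖) ^ (2 * d) * G v
      ≤ 2 ^ (2 * d) * (Finset.Iic (2 * d, 0)).sup (fun m => SchwartzMap.seminorm ℝ m.1 m.2) H := by
    intro v
    have h := SchwartzMap.one_add_le_sup_seminorm_apply (𝕜 := ℝ) (m := (2 * d, 0)) le_rfl le_rfl H v
    rw [norm_iteratedFDeriv_zero] at h
    exact le_trans (by gcongr; exact (hGH v).2.trans (le_abs_self _)) h
  obtain ⟨C, hC⟩ := exists_one_add_norm_pow_mul_heatSG_le hS hG (2 * d) hM hT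
  refine ⟨2 * max C 1, by positivity, fun t ht u => ?_⟩
  rw [le_div_iff₀ (by positivity)]
  calc heatSG S t G u * (1 + ‖u‖ ^ (2 * d))
      ≤ heatSG S t G u * (2 * (1 + ‖u‖) ^ (2 * d)) := by
        gcongr
        · exact heatSG_nonneg hG t u
        · exact one_add_pow_le_two_mul_one_add_pow _ (norm_nonneg u)
    _ = 2 * ((1 + ‖u‖) ^ (2 * d) * heatSG S t G u) := by ring
    _ ≤ 2 * max C 1 := by gcongr; exact (hC t ht u).trans (le_max_left _ _)

/-- uniform-in-time polynomial decay of the heat semigroup applied to a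
continuous function dominated by a Schwartz function. -/
theorem stmt5 (d : ℕ) (hd : 1 ≤ d) (S : Matrix (Fin d) (Fin d) ℝ) (hS : S.PosDef)
    (G : EuclideanSpace ℝ (Fin d) → ℝ) (hGcont : Continuous G)
    (H : SchwartzMap (EuclideanSpace ℝ (Fin d)) ℝ)
    (hGH : ∀ u, 0 ≤ G u ∧ G u ≤ H u)
    (T : ℝ) (hT : 0 < T) :
    ∃ C > 0, ∀ t ∈ Icc (0:ℝ) T, ∀ u, heatSG S t G u ≤ C / (1 + ‖u‖ ^ (2 * d)) :=
  stmt5_general d S hS G H hGH T hT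
end

section
/- Let n ≥ 1 be an integer and let χ_1, …, χ_{n+1} > 0. Then there exist constants C > 0 and χ̄ > 0, depending only on n and χ_1, …, χ_{n+1}, such that for every m ∈ ℕ, Σ_{m_1 ≥ 0} Σ_{m_2 ≥ 0} ⋯ Σ_{m_n ≥ 0} e^{−χ_{n+1} |m − m_n|} e^{−χ_n |m_n − m_{n−1}|} ⋯ e^{−χ_2 |m_2 − m_1|} e^{−χ_1 m_1} ≤ C e^{−χ̄ m}. -/
open Finset

/-- Lemma A.5(1), abstract form: an iterated exponential convolution bound.
Given `χ_1, …, χ_{n+1} > 0` (here indexed by `Fin (n+1)`), the iterated sum over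
`(m_1, …, m_n) ∈ ℕ^n` of `e^{-χ_{n+1}|m - m_n|} ⋯ e^{-χ_2 |m_2 - m_1|} e^{-χ_1 m_1}` is
bounded by `C e^{-χ̄ m}` for constants `C, χ̄ > 0` depending only on `n` and the `χ`'s.
The chain `0, m_1, …, m_n, m` is encoded via `Fin.snoc (Fin.cons 0 ms) m`. -/
theorem stmt10 (n : ℕ) (hn : 1 ≤ n) (χ : Fin (n + 1) → ℝ) (hχ : ∀ i, 0 < χ i) :
    ∃ C > (0:ℝ), ∃ χbar > (0:ℝ), ∀ m : ℕ,
      (∑' ms : Fin n → ℕ,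
        ∏ i : Fin (n + 1),
          Real.exp (-(χ i) *
            |(((Fin.snoc (Fin.cons 0 ms) m : Fin (n + 2) → ℕ) i.succ : ℕ) : ℝ) -
             (((Fin.snoc (Fin.cons 0 ms) m : Fin (n + 2) → ℕ) i.castSucc : ℕ) : ℝ)|))
      ≤ C * Real.exp (-χbar * (m : ℝ)) := by
  have hnpos : (0:ℝ) < n := by exact_mod_cast hn
  set χmin := Finset.univ.inf' Finset.univ_nonempty χ with hχmin
  have hχminpos : 0 < χmin := by
    rw [hχmin, Finset.lt_inf'_iff]
    exact fun i _ => hχ i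
  have hχminle : ∀ i : Fin (n+1), χmin ≤ χ i := fun i =>
    Finset.inf'_le χ (Finset.mem_univ i)
  set ε := χmin / 2 with hε
  have hεpos : 0 < ε := by positivity
  set a := ε / n with ha
  have hapos : 0 < a := by positivity
  have han : a * n = ε := by rw [ha]; field_simp
  set r := Real.exp (-a) with hr
  have hr0 : 0 < r := Real.exp_pos _
  have hr1 : r < 1 := by
    rw [hr, Real.exp_lt_one_iff]
    linarith
  have hgsum : Summable (fun k : ℕ => r ^ k) :=
    summable_geometric_of_lt_one hr0.le hr1
  set T := ∑' k : ℕ, r ^ k with hT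
  have hT1 : (1:ℝ) ≤ T := by
    have := Summable.le_tsum hgsum 0 (fun k _ => by positivity)
    simpa using this
  have hTpos : 0 < T := lt_of_lt_of_le one_pos hT1
  refine ⟨T ^ n, by positivity, ε, hεpos, fun m => ?_⟩
  -- key pointwise bound
  have key : ∀ ms : Fin n → ℕ,
      (∏ i : Fin (n + 1),
        Real.exp (-(χ i) *
          |(((Fin.snoc (Fin.cons 0 ms) m : Fin (n + 2) → ℕ) i.succ : ℕ) : ℝ) -
           (((Fin.snoc (Fin.cons 0 ms) m : Fin (n + 2) → ℕ) i.castSucc : ℕ) : ℝ)|))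
      ≤ Real.exp (-ε * m) * ∏ k : Fin n, r ^ (ms k) := by
    intro ms
    set x : Fin (n + 2) → ℕ := Fin.snoc (Fin.cons 0 ms) m with hx
    set u : ℕ → ℝ := fun j => if h : j < n + 2 then ((x ⟨j, h⟩ : ℕ) : ℝ) else 0 with hu
    have hu0 : u 0 = 0 := by
      have h0 : (⟨0, by omega⟩ : Fin (n+2)) = (0 : Fin (n+1)).castSucc := rfl
      simp only [hu, dif_pos (by omega : 0 < n + 2), h0, hx, Fin.snoc_castSucc,
        Fin.cons_zero, Nat.cast_zero]
    have hulast : u (n+1) = m := by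
      have h0 : (⟨n+1, by omega⟩ : Fin (n+2)) = Fin.last (n+1) := rfl
      simp only [hu, dif_pos (by omega : n + 1 < n + 2), h0, hx, Fin.snoc_last]
    have husucc : ∀ i : Fin (n+1), ((x i.succ : ℕ) : ℝ) = u ((i : ℕ) + 1) := by
      intro i
      have hlt : (i : ℕ) + 1 < n + 2 := by omega
      have h0 : (⟨(i : ℕ) + 1, hlt⟩ : Fin (n+2)) = i.succ := rfl
      simp only [hu, dif_pos hlt, h0]
    have hucast : ∀ i : Fin (n+1), ((x i.castSucc : ℕ) : ℝ) = u (i : ℕ) := by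
      intro i
      have hlt : (i : ℕ) < n + 2 := by omega
      have h0 : (⟨(i : ℕ), hlt⟩ : Fin (n+2)) = i.castSucc := rfl
      simp only [hu, dif_pos hlt, h0]
    have hums : ∀ k : Fin n, u ((k : ℕ) + 1) = ms k := by
      intro k
      have hlt : (k : ℕ) + 1 < n + 2 := by omega
      have h0 : (⟨(k : ℕ) + 1, hlt⟩ : Fin (n+2)) = (k.succ : Fin (n+1)).castSucc := by
        apply Fin.ext; simp
      simp only [hu, dif_pos hlt, h0, hx, Fin.snoc_castSucc, Fin.cons_succ]
    set D := ∑ j ∈ Finset.range (n+1), |u (j+1) - u j| with hD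
    have hDnonneg : 0 ≤ D := Finset.sum_nonneg fun j _ => abs_nonneg _
    have hmD : (m : ℝ) ≤ D := by
      have htel : ∑ j ∈ Finset.range (n+1), (u (j+1) - u j) = u (n+1) - u 0 :=
        Finset.sum_range_sub u (n+1)
      have h1 : (m : ℝ) = ∑ j ∈ Finset.range (n+1), (u (j+1) - u j) := by
        rw [htel, hulast, hu0]; ring
      calc (m : ℝ) = ∑ j ∈ Finset.range (n+1), (u (j+1) - u j) := h1
        _ ≤ |∑ j ∈ Finset.range (n+1), (u (j+1) - u j)| := le_abs_self _
        _ ≤ D := Finset.abs_sum_le_sum_abs _ _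
    have hkD : ∀ k : Fin n, (ms k : ℝ) ≤ D := by
      intro k
      have htel : ∑ j ∈ Finset.range ((k:ℕ)+1), (u (j+1) - u j) = u ((k:ℕ)+1) - u 0 :=
        Finset.sum_range_sub u ((k:ℕ)+1)
      have h1 : (ms k : ℝ) = ∑ j ∈ Finset.range ((k:ℕ)+1), (u (j+1) - u j) := by
        rw [htel, hums, hu0]; ring
      calc (ms k : ℝ) = ∑ j ∈ Finset.range ((k:ℕ)+1), (u (j+1) - u j) := h1
        _ ≤ |∑ j ∈ Finset.range ((k:ℕ)+1), (u (j+1) - u j)| := le_abs_self _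
        _ ≤ ∑ j ∈ Finset.range ((k:ℕ)+1), |u (j+1) - u j| := Finset.abs_sum_le_sum_abs _ _
        _ ≤ D := Finset.sum_le_sum_of_subset_of_nonneg
            (Finset.range_subset_range.mpr (by omega)) (fun j _ _ => abs_nonneg _)
    have hsumms : ∑ k : Fin n, (ms k : ℝ) ≤ n * D := by
      calc ∑ k : Fin n, (ms k : ℝ) ≤ ∑ _k : Fin n, D := Finset.sum_le_sum fun k _ => hkD k
        _ = n * D := by simp [mul_comm]
    -- sum over Fin (n+1) of χ i * |u(i+1) - u i| is at least 2 ε D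
    have hχD : 2 * ε * D ≤ ∑ i : Fin (n+1), χ i * |u ((i:ℕ)+1) - u (i:ℕ)| := by
      have h2ε : 2 * ε = χmin := by rw [hε]; ring
      have hfin : ∑ i : Fin (n+1), |u ((i:ℕ)+1) - u (i:ℕ)| = D := by
        rw [hD, Fin.sum_univ_eq_sum_range (fun j => |u (j+1) - u j|)]
      calc 2 * ε * D = χmin * ∑ i : Fin (n+1), |u ((i:ℕ)+1) - u (i:ℕ)| := by
            rw [h2ε, hfin]
        _ = ∑ i : Fin (n+1), χmin * |u ((i:ℕ)+1) - u (i:ℕ)| := Finset.mul_sum _ _ _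
        _ ≤ ∑ i : Fin (n+1), χ i * |u ((i:ℕ)+1) - u (i:ℕ)| :=
            Finset.sum_le_sum fun i _ =>
              mul_le_mul_of_nonneg_right (hχminle i) (abs_nonneg _)
    have hexp : ε * m + a * ∑ k : Fin n, (ms k : ℝ)
        ≤ ∑ i : Fin (n+1), χ i * |u ((i:ℕ)+1) - u (i:ℕ)| := by
      have h1 : ε * m ≤ ε * D := mul_le_mul_of_nonneg_left hmD hεpos.le
      have h2 : a * ∑ k : Fin n, (ms k : ℝ) ≤ ε * D := by
        calc a * ∑ k : Fin n, (ms k : ℝ) ≤ a * (n * D) :=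
              mul_le_mul_of_nonneg_left hsumms hapos.le
          _ = ε * D := by rw [← han]; ring
      linarith
    -- now assemble
    calc (∏ i : Fin (n + 1),
          Real.exp (-(χ i) * |((x i.succ : ℕ) : ℝ) - ((x i.castSucc : ℕ) : ℝ)|))
        = ∏ i : Fin (n + 1), Real.exp (-(χ i) * |u ((i:ℕ)+1) - u (i:ℕ)|) := by
          refine Finset.prod_congr rfl fun i _ => ?_
          rw [husucc i, hucast i]
      _ = Real.exp (∑ i : Fin (n+1), -(χ i) * |u ((i:ℕ)+1) - u (i:ℕ)|) :=
          (Real.exp_sum _ _).symm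
      _ = Real.exp (-(∑ i : Fin (n+1), χ i * |u ((i:ℕ)+1) - u (i:ℕ)|)) := by
          rw [← Finset.sum_neg_distrib]; simp
      _ ≤ Real.exp (-(ε * m + a * ∑ k : Fin n, (ms k : ℝ))) := by
          apply Real.exp_le_exp.mpr; linarith
      _ = Real.exp (-ε * m) * Real.exp (-(a * ∑ k : Fin n, (ms k : ℝ))) := by
          rw [← Real.exp_add]; ring_nf
      _ = Real.exp (-ε * m) * ∏ k : Fin n, r ^ (ms k) := by
          congr 1
          rw [Finset.mul_sum, ← Finset.sum_neg_distrib, Real.exp_sum]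
          refine Finset.prod_congr rfl fun k _ => ?_
          rw [hr, ← Real.exp_nat_mul]
          congr 1
          ring
  -- bound the tsum via finite partial sums
  have hnonneg : ∀ ms : Fin n → ℕ, (0:ℝ) ≤
      ∏ i : Fin (n + 1),
        Real.exp (-(χ i) *
          |(((Fin.snoc (Fin.cons 0 ms) m : Fin (n + 2) → ℕ) i.succ : ℕ) : ℝ) -
           (((Fin.snoc (Fin.cons 0 ms) m : Fin (n + 2) → ℕ) i.castSucc : ℕ) : ℝ)|) :=
    fun ms => Finset.prod_nonneg fun i _ => (Real.exp_pos _).le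
  refine tsum_le_of_sum_le' (by positivity) fun s => ?_
  -- embed s in a big box
  set N := (s.sup fun ms => Finset.univ.sup ms) + 1 with hN
  have hsub : s ⊆ Fintype.piFinset fun _ : Fin n => Finset.range N := by
    intro ms hms
    rw [Fintype.mem_piFinset]
    intro k
    rw [Finset.mem_range, hN]
    have h1 : ms k ≤ Finset.univ.sup ms := Finset.le_sup (Finset.mem_univ k)
    have h2 : Finset.univ.sup ms ≤ s.sup fun ms => Finset.univ.sup ms :=
      Finset.le_sup (f := fun ms => Finset.univ.sup ms) hms
    omega
  calc (∑ ms ∈ s, ∏ i : Fin (n + 1),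
        Real.exp (-(χ i) *
          |(((Fin.snoc (Fin.cons 0 ms) m : Fin (n + 2) → ℕ) i.succ : ℕ) : ℝ) -
           (((Fin.snoc (Fin.cons 0 ms) m : Fin (n + 2) → ℕ) i.castSucc : ℕ) : ℝ)|))
      ≤ ∑ ms ∈ Fintype.piFinset (fun _ : Fin n => Finset.range N),
          ∏ i : Fin (n + 1),
            Real.exp (-(χ i) *
              |(((Fin.snoc (Fin.cons 0 ms) m : Fin (n + 2) → ℕ) i.succ : ℕ) : ℝ) -
               (((Fin.snoc (Fin.cons 0 ms) m : Fin (n + 2) → ℕ) i.castSucc : ℕ) : ℝ)|) :=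
        Finset.sum_le_sum_of_subset_of_nonneg hsub (fun ms _ _ => hnonneg ms)
    _ ≤ ∑ ms ∈ Fintype.piFinset (fun _ : Fin n => Finset.range N),
          Real.exp (-ε * m) * ∏ k : Fin n, r ^ (ms k) :=
        Finset.sum_le_sum fun ms _ => key ms
    _ = Real.exp (-ε * m) *
          ∑ ms ∈ Fintype.piFinset (fun _ : Fin n => Finset.range N),
            ∏ k : Fin n, r ^ (ms k) := by rw [Finset.mul_sum]
    _ = Real.exp (-ε * m) * ∏ _k : Fin n, ∑ j ∈ Finset.range N, r ^ j := by
        rw [Finset.prod_univ_sum]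
    _ ≤ Real.exp (-ε * m) * ∏ _k : Fin n, T := by
        apply mul_le_mul_of_nonneg_left _ (Real.exp_pos _).le
        refine Finset.prod_le_prod (fun k _ => Finset.sum_nonneg fun j _ => by positivity)
          (fun k _ => ?_)
        exact Summable.sum_le_tsum _ (fun j _ => by positivity) hgsum
    _ = T ^ n * Real.exp (-ε * m) := by
        rw [Finset.prod_const, Finset.card_univ, Fintype.card_fin]; ring
end

section
/- Let d ≥ 1 and n ≥ 0 be integers and let q_1, …, q_{n+1} : ℤ^d × ℤ^d → [0, 1] be stochastic kernels, i.e. Σ_{y ∈ ℤ^d} q_k(z, y) = 1 for every z and k. Fix x ∈ ℤ^d and χ_1, …, χ_{n+1} > 0, and assume: for every k ∈ {1, …, n+1}, every z ∈ ℤ^d with |z − x|₁ = m', and every m ∈ ℕ with m ≠ m', one has Σ_{y ∈ ℤ^d : |y − x|₁ = m} q_k(z, y) ≤ e^{−χ_k |m − m'|}. Then there exist constants C > 0 and χ̄ > 0, depending only on n and χ_1, …, χ_{n+1}, such that for every m ∈ ℕ, Σ_{y : |y − x|₁ = m} Σ_{z_1 ∈ ℤ^d} ⋯ Σ_{z_n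 ∈ ℤ^d} q_1(x, z_1) q_2(z_1, z_2) ⋯ q_{n+1}(z_n, y) ≤ C e^{−χ̄ m}. -/
open Finset

/-- The ℓ¹ (graph) distance-to-origin on the lattice `ℤ^d`. -/
def l1 {d : ℕ} (z : Fin d → ℤ) : ℕ := ∑ i, (z i).natAbs

open scoped ENNReal

private lemma stmt11_tsum_dist_le (r : ℝ≥0∞) (m0 : ℕ) :
    ∑' m1 : ℕ, r ^ (Nat.dist m1 m0) ≤ 2 * (1 - r)⁻¹ := by
  set f : ℕ → ℕ × Bool := fun m1 => if m0 ≤ m1 then (m1 - m0, true) else (m0 - m1, false) with hf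
  have hinj : Function.Injective f := by
    intro a b h
    simp only [hf] at h
    split_ifs at h <;> simp_all [Prod.ext_iff] <;> omega
  have hval : ∀ m1, r ^ (Nat.dist m1 m0) = (fun p : ℕ × Bool => r ^ p.1) (f m1) := by
    intro m1
    by_cases h : m0 ≤ m1
    · simp [hf, h, Nat.dist_eq_sub_of_le_right h]
    · simp [hf, h, Nat.dist_eq_sub_of_le (le_of_not_ge h)]
  calc ∑' m1 : ℕ, r ^ (Nat.dist m1 m0) = ∑' m1, (fun p : ℕ × Bool => r ^ p.1) (f m1) := by
        simp_rw [← hval]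
    _ ≤ ∑' p : ℕ × Bool, r ^ p.1 := ENNReal.tsum_comp_le_tsum_of_injective hinj _
    _ = ∑' j : ℕ, ∑' _ : Bool, r ^ j := ENNReal.tsum_prod'
    _ = ∑' j : ℕ, 2 * r ^ j := by
        congr 1; funext j; rw [tsum_fintype]; simp [two_mul]
    _ = 2 * (1 - r)⁻¹ := by rw [ENNReal.tsum_mul_left, ENNReal.tsum_geometric]

private lemma stmt11_snoc_cons_comp_succ {α : Type*} {n : ℕ} (a : α) (w : Fin n → α) (y : α) :
    (Fin.snoc (Fin.cons a w) y : Fin (n + 2) → α) ∘ Fin.succ = Fin.snoc w y := by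
  funext i
  refine Fin.lastCases ?_ (fun j => ?_) i
  · show (Fin.snoc (Fin.cons a w) y : Fin (n + 2) → α) (Fin.last _).succ = _
    rw [Fin.succ_last, Fin.snoc_last, Fin.snoc_last]
  · show (Fin.snoc (Fin.cons a w) y : Fin (n + 2) → α) (j.castSucc).succ = _
    rw [Fin.succ_castSucc, Fin.snoc_castSucc, Fin.snoc_castSucc, Fin.cons_succ]

private lemma stmt11_ofReal_tsum_le {ι : Type*} (f : ι → ℝ) (hf : ∀ i, 0 ≤ f i) :
    ENNReal.ofReal (∑' i, f i) ≤ ∑' i, ENNReal.ofReal (f i) := by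
  by_cases h : Summable f
  · rw [ENNReal.ofReal_tsum_of_nonneg hf h]
  · rw [tsum_eq_zero_of_not_summable h]; simp

private lemma stmt11_main_ind {d : ℕ} (x : Fin d → ℤ) (r : ℝ≥0∞) (hr : r ≤ 1) :
    ∀ (n : ℕ) (Q : Fin (n + 1) → (Fin d → ℤ) → (Fin d → ℤ) → ℝ≥0∞)
      (_ : ∀ (k : Fin (n + 1)) (z : Fin d → ℤ) (m : ℕ),
        (∑' y : {y : Fin d → ℤ // l1 (y - x) = m}, Q k z (y : Fin d → ℤ)) ≤
          (r * r) ^ Nat.dist m (l1 (z - x)))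
      (z0 : Fin d → ℤ) (m : ℕ),
      (∑' (y : {y : Fin d → ℤ // l1 (y - x) = m}) (zs : Fin n → (Fin d → ℤ)),
        ∏ k : Fin (n + 1),
          Q k ((Fin.snoc (Fin.cons z0 zs) (y : Fin d → ℤ) : Fin (n + 2) → (Fin d → ℤ)) k.castSucc)
              ((Fin.snoc (Fin.cons z0 zs) (y : Fin d → ℤ) : Fin (n + 2) → (Fin d → ℤ)) k.succ))
        ≤ (2 * (1 - r)⁻¹) ^ n * r ^ Nat.dist m (l1 (z0 - x)) := by
  intro n
  induction n with
  | zero =>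
    intro Q H z0 m
    simp only [pow_zero, one_mul]
    have h1 : ∀ y : {y : Fin d → ℤ // l1 (y - x) = m},
        (∑' zs : Fin 0 → (Fin d → ℤ),
          ∏ k : Fin 1,
            Q k ((Fin.snoc (Fin.cons z0 zs) (y : Fin d → ℤ) : Fin 2 → (Fin d → ℤ)) k.castSucc)
                ((Fin.snoc (Fin.cons z0 zs) (y : Fin d → ℤ) : Fin 2 → (Fin d → ℤ)) k.succ))
          = Q 0 z0 (y : Fin d → ℤ) := by
      intro y
      rw [tsum_eq_single (default : Fin 0 → (Fin d → ℤ))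
        (fun b hb => absurd (Subsingleton.elim b default) hb)]
      rw [Fin.prod_univ_one]
      have e1 : (Fin.snoc (Fin.cons z0 (default : Fin 0 → (Fin d → ℤ))) (y : Fin d → ℤ) :
          Fin 2 → (Fin d → ℤ)) ((0 : Fin 1).castSucc) = z0 := by
        rw [Fin.snoc_castSucc, Fin.cons_zero]
      have e2 : (Fin.snoc (Fin.cons z0 (default : Fin 0 → (Fin d → ℤ))) (y : Fin d → ℤ) :
          Fin 2 → (Fin d → ℤ)) ((0 : Fin 1).succ) = (y : Fin d → ℤ) := by
        have h10 : (0 : Fin 1).succ = Fin.last 1 := rfl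
        rw [h10, Fin.snoc_last]
      rw [e1, e2]
    rw [tsum_congr h1]
    calc (∑' y : {y : Fin d → ℤ // l1 (y - x) = m}, Q 0 z0 (y : Fin d → ℤ))
        ≤ (r * r) ^ Nat.dist m (l1 (z0 - x)) := H 0 z0 m
      _ ≤ r ^ Nat.dist m (l1 (z0 - x)) := by
          apply pow_le_pow_left' (by simpa using mul_le_mul_left hr r)
  | succ n ih =>
    intro Q H z0 m
    set K : ℝ≥0∞ := 2 * (1 - r)⁻¹ with hK
    have hpow : ∀ {a b : ℕ}, a ≤ b → r ^ b ≤ r ^ a := by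
      intro a b h
      calc r ^ b = r ^ a * r ^ (b - a) := by rw [← pow_add, Nat.add_sub_cancel' h]
        _ ≤ r ^ a * 1 := mul_le_mul_right (pow_le_one' hr _) _
        _ = r ^ a := mul_one _
    have key : ∀ (y : {y : Fin d → ℤ // l1 (y - x) = m}) (z1 : Fin d → ℤ)
        (zs' : Fin n → (Fin d → ℤ)),
        (∏ k : Fin (n + 2),
          Q k ((Fin.snoc (Fin.cons z0 (Fin.cons z1 zs')) (y : Fin d → ℤ) :
                  Fin (n + 3) → (Fin d → ℤ)) k.castSucc)
              ((Fin.snoc (Fin.cons z0 (Fin.cons z1 zs')) (y : Fin d → ℤ) :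
                  Fin (n + 3) → (Fin d → ℤ)) k.succ))
        = Q 0 z0 z1 * ∏ k : Fin (n + 1),
            Q k.succ ((Fin.snoc (Fin.cons z1 zs') (y : Fin d → ℤ) :
                  Fin (n + 2) → (Fin d → ℤ)) k.castSucc)
              ((Fin.snoc (Fin.cons z1 zs') (y : Fin d → ℤ) :
                  Fin (n + 2) → (Fin d → ℤ)) k.succ) := by
      intro y z1 zs'
      set C : Fin (n + 3) → (Fin d → ℤ) :=
        (Fin.snoc (Fin.cons z0 (Fin.cons z1 zs')) (y : Fin d → ℤ)) with hCdef
      set C' : Fin (n + 2) → (Fin d → ℤ) :=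
        (Fin.snoc (Fin.cons z1 zs') (y : Fin d → ℤ)) with hC'def
      have hC : C ∘ Fin.succ = C' :=
        stmt11_snoc_cons_comp_succ z0 (Fin.cons z1 zs') (y : Fin d → ℤ)
      rw [Fin.prod_univ_succ]
      refine congrArg₂ (· * ·) ?_ ?_
      · have e1 : C ((0 : Fin (n + 2)).castSucc) = z0 := by
          rw [Fin.castSucc_zero, hCdef, ← Fin.castSucc_zero, Fin.snoc_castSucc, Fin.cons_zero]
        have e2 : C ((0 : Fin (n + 2)).succ) = z1 := by
          have : C ((0 : Fin (n + 2)).succ) = C' 0 := congrFun hC 0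
          rw [this, hC'def, ← Fin.castSucc_zero, Fin.snoc_castSucc, Fin.cons_zero]
        rw [e1, e2]
      · refine Finset.prod_congr rfl fun k _ => ?_
        have e3 : C ((k.succ).castSucc) = C' k.castSucc := by
          rw [← Fin.succ_castSucc]
          exact congrFun hC k.castSucc
        have e4 : C ((k.succ).succ) = C' k.succ := congrFun hC k.succ
        rw [e3, e4]
    have hsplit : ∀ y : {y : Fin d → ℤ // l1 (y - x) = m},
        (∑' zs : Fin (n + 1) → (Fin d → ℤ),
          ∏ k : Fin (n + 2),
            Q k ((Fin.snoc (Fin.cons z0 zs) (y : Fin d → ℤ) :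
                    Fin (n + 3) → (Fin d → ℤ)) k.castSucc)
                ((Fin.snoc (Fin.cons z0 zs) (y : Fin d → ℤ) :
                    Fin (n + 3) → (Fin d → ℤ)) k.succ))
        = ∑' z1 : Fin d → ℤ, ∑' zs' : Fin n → (Fin d → ℤ), Q 0 z0 z1 *
            ∏ k : Fin (n + 1),
              Q k.succ ((Fin.snoc (Fin.cons z1 zs') (y : Fin d → ℤ) :
                    Fin (n + 2) → (Fin d → ℤ)) k.castSucc)
                ((Fin.snoc (Fin.cons z1 zs') (y : Fin d → ℤ) :
                    Fin (n + 2) → (Fin d → ℤ)) k.succ) := by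
      intro y
      rw [← (Fin.consEquiv (fun _ : Fin (n + 1) => (Fin d → ℤ))).tsum_eq, ENNReal.tsum_prod']
      refine tsum_congr fun z1 => tsum_congr fun zs' => ?_
      have : (Fin.consEquiv (fun _ : Fin (n + 1) => (Fin d → ℤ))) (z1, zs') = Fin.cons z1 zs' :=
        rfl
      rw [this, key y z1 zs']
    calc (∑' (y : {y : Fin d → ℤ // l1 (y - x) = m}) (zs : Fin (n + 1) → (Fin d → ℤ)),
          ∏ k : Fin (n + 2),
            Q k ((Fin.snoc (Fin.cons z0 zs) (y : Fin d → ℤ) :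
                    Fin (n + 3) → (Fin d → ℤ)) k.castSucc)
                ((Fin.snoc (Fin.cons z0 zs) (y : Fin d → ℤ) :
                    Fin (n + 3) → (Fin d → ℤ)) k.succ))
        = ∑' z1 : Fin d → ℤ, Q 0 z0 z1 *
            ∑' (y : {y : Fin d → ℤ // l1 (y - x) = m}) (zs' : Fin n → (Fin d → ℤ)),
              ∏ k : Fin (n + 1),
                Q k.succ ((Fin.snoc (Fin.cons z1 zs') (y : Fin d → ℤ) :
                      Fin (n + 2) → (Fin d → ℤ)) k.castSucc)
                  ((Fin.snoc (Fin.cons z1 zs') (y : Fin d → ℤ) :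
                      Fin (n + 2) → (Fin d → ℤ)) k.succ) := by
          rw [tsum_congr hsplit, ENNReal.tsum_comm]
          exact tsum_congr fun z1 => by
            rw [← ENNReal.tsum_mul_left]
            exact tsum_congr fun y => by rw [← ENNReal.tsum_mul_left]
      _ ≤ ∑' z1 : Fin d → ℤ, Q 0 z0 z1 * (K ^ n * r ^ Nat.dist m (l1 (z1 - x))) :=
          ENNReal.tsum_le_tsum fun z1 => mul_le_mul_right
            (ih (fun k => Q k.succ) (fun k z mm => H k.succ z mm) z1 m) _
      _ = ∑' m1 : ℕ, ∑' z1 : {z : Fin d → ℤ // l1 (z - x) = m1},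
            Q 0 z0 (z1 : Fin d → ℤ) * (K ^ n * r ^ Nat.dist m (l1 ((z1 : Fin d → ℤ) - x))) := by
          rw [← (Equiv.sigmaFiberEquiv (fun z : Fin d → ℤ => l1 (z - x))).tsum_eq,
            ENNReal.tsum_sigma']
          rfl
      _ = ∑' m1 : ℕ, (∑' z1 : {z : Fin d → ℤ // l1 (z - x) = m1},
            Q 0 z0 (z1 : Fin d → ℤ)) * (K ^ n * r ^ Nat.dist m m1) := by
          refine tsum_congr fun m1 => ?_
          rw [← ENNReal.tsum_mul_right]
          exact tsum_congr fun z1 => by rw [z1.2]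
      _ ≤ ∑' m1 : ℕ, (r * r) ^ Nat.dist m1 (l1 (z0 - x)) * (K ^ n * r ^ Nat.dist m m1) :=
          ENNReal.tsum_le_tsum fun m1 => mul_le_mul_left (H 0 z0 m1) _
      _ ≤ ∑' m1 : ℕ, (K ^ n * r ^ Nat.dist m (l1 (z0 - x))) * r ^ Nat.dist m1 (l1 (z0 - x)) := by
          refine ENNReal.tsum_le_tsum fun m1 => ?_
          have h1 : (r * r) ^ Nat.dist m1 (l1 (z0 - x)) * r ^ Nat.dist m m1
              = r ^ (Nat.dist m m1 + 2 * Nat.dist m1 (l1 (z0 - x))) := by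
            rw [mul_pow, pow_add, two_mul, pow_add]; ring
          have h2 : Nat.dist m (l1 (z0 - x)) + Nat.dist m1 (l1 (z0 - x))
              ≤ Nat.dist m m1 + 2 * Nat.dist m1 (l1 (z0 - x)) := by
            have := Nat.dist.triangle_inequality m m1 (l1 (z0 - x))
            omega
          calc (r * r) ^ Nat.dist m1 (l1 (z0 - x)) * (K ^ n * r ^ Nat.dist m m1)
              = K ^ n * ((r * r) ^ Nat.dist m1 (l1 (z0 - x)) * r ^ Nat.dist m m1) := by ring
            _ = K ^ n * r ^ (Nat.dist m m1 + 2 * Nat.dist m1 (l1 (z0 - x))) := by rw [h1]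
            _ ≤ K ^ n * r ^ (Nat.dist m (l1 (z0 - x)) + Nat.dist m1 (l1 (z0 - x))) :=
                mul_le_mul_right (hpow h2) _
            _ = (K ^ n * r ^ Nat.dist m (l1 (z0 - x))) * r ^ Nat.dist m1 (l1 (z0 - x)) := by
                rw [pow_add]; ring
      _ ≤ K ^ (n + 1) * r ^ Nat.dist m (l1 (z0 - x)) := by
          rw [ENNReal.tsum_mul_left]
          calc (K ^ n * r ^ Nat.dist m (l1 (z0 - x))) *
                ∑' m1 : ℕ, r ^ Nat.dist m1 (l1 (z0 - x))
              ≤ (K ^ n * r ^ Nat.dist m (l1 (z0 - x))) * K :=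
                mul_le_mul_right (stmt11_tsum_dist_le r _) _
            _ = K ^ (n + 1) * r ^ Nat.dist m (l1 (z0 - x)) := by rw [pow_succ]; ring

/-- Lemma A.5(1): exponential off-diagonal bound for iterated stochastic
kernels on `ℤ^d`. The chain `x, z_1, …, z_n, y` is encoded via `Fin.snoc (Fin.cons x zs) y`. -/
theorem stmt11 (d : ℕ) (hd : 1 ≤ d) (n : ℕ)
    (q : Fin (n + 1) → (Fin d → ℤ) → (Fin d → ℤ) → ℝ)
    (hq01 : ∀ k z y, q k z y ∈ Set.Icc (0:ℝ) 1)
    (hq_row : ∀ k z, HasSum (fun y => q k z y) 1)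
    (x : Fin d → ℤ) (χ : Fin (n + 1) → ℝ) (hχ : ∀ k, 0 < χ k)
    (hbound : ∀ k, ∀ z : Fin d → ℤ, ∀ m : ℕ, m ≠ l1 (z - x) →
      (∑' y : {y : Fin d → ℤ // l1 (y - x) = m}, q k z (y : Fin d → ℤ)) ≤
        Real.exp (-(χ k) * |(m : ℝ) - (l1 (z - x) : ℝ)|)) :
    ∃ C > (0:ℝ), ∃ χbar > (0:ℝ), ∀ m : ℕ,
      (∑' y : {y : Fin d → ℤ // l1 (y - x) = m}, ∑' zs : Fin n → (Fin d → ℤ),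
        ∏ k : Fin (n + 1),
          q k ((Fin.snoc (Fin.cons x zs) (y : Fin d → ℤ) : Fin (n + 2) → (Fin d → ℤ)) k.castSucc)
              ((Fin.snoc (Fin.cons x zs) (y : Fin d → ℤ) : Fin (n + 2) → (Fin d → ℤ)) k.succ))
      ≤ C * Real.exp (-χbar * (m : ℝ)) := by
  have hne : (univ : Finset (Fin (n+1))).Nonempty := ⟨0, mem_univ 0⟩
  set χmin := univ.inf' hne χ with hχmin
  have hχmin_pos : 0 < χmin := by
    obtain ⟨i, _, hi⟩ := Finset.exists_mem_eq_inf' hne χ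
    rw [hχmin, hi]; exact hχ i
  have hχmin_le : ∀ k, χmin ≤ χ k := fun k => Finset.inf'_le _ (mem_univ k)
  set a := χmin / 2 with ha_def
  have ha : 0 < a := by positivity
  set e := Real.exp (-a) with he_def
  have he_pos : 0 < e := Real.exp_pos _
  have he_lt1 : e < 1 := Real.exp_lt_one_iff.mpr (by linarith)
  set r := ENNReal.ofReal e with hr_def
  have hr1 : r ≤ 1 := ENNReal.ofReal_le_one.mpr he_lt1.le
  have hrr : r * r = ENNReal.ofReal (Real.exp (-χmin)) := by
    rw [hr_def, ← ENNReal.ofReal_mul he_pos.le, he_def, ← Real.exp_add]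
    congr 1; rw [ha_def]; ring
  have H : ∀ (k : Fin (n+1)) (z : Fin d → ℤ) (m : ℕ),
      (∑' y : {y : Fin d → ℤ // l1 (y - x) = m}, ENNReal.ofReal (q k z (y : Fin d → ℤ))) ≤
        (r * r) ^ Nat.dist m (l1 (z - x)) := by
    intro k z m
    by_cases hm : m = l1 (z - x)
    · rw [hm, Nat.dist_self, pow_zero]
      calc (∑' y : {y : Fin d → ℤ // l1 (y - x) = l1 (z - x)},
              ENNReal.ofReal (q k z (y : Fin d → ℤ)))
          ≤ ∑' y : Fin d → ℤ, ENNReal.ofReal (q k z y) :=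
            ENNReal.tsum_comp_le_tsum_of_injective Subtype.val_injective _
        _ = ENNReal.ofReal 1 := by
            rw [← ENNReal.ofReal_tsum_of_nonneg (fun y => (hq01 k z y).1) (hq_row k z).summable,
              (hq_row k z).tsum_eq]
        _ ≤ 1 := by simp
    · have hsub : Summable fun y : {y : Fin d → ℤ // l1 (y - x) = m} => q k z (y : Fin d → ℤ) :=
        (hq_row k z).summable.subtype _
      rw [← ENNReal.ofReal_tsum_of_nonneg (fun y => (hq01 k z _).1) hsub]
      have habs : |(m : ℝ) - (l1 (z - x) : ℝ)| = (Nat.dist m (l1 (z - x)) : ℝ) := by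
        rcases le_total m (l1 (z - x)) with h | h
        · rw [Nat.dist_eq_sub_of_le h, Nat.cast_sub h, abs_sub_comm,
            abs_of_nonneg (sub_nonneg.mpr (Nat.cast_le.mpr h))]
        · rw [Nat.dist_eq_sub_of_le_right h, Nat.cast_sub h,
            abs_of_nonneg (sub_nonneg.mpr (Nat.cast_le.mpr h))]
      calc ENNReal.ofReal (∑' y : {y : Fin d → ℤ // l1 (y - x) = m}, q k z (y : Fin d → ℤ))
          ≤ ENNReal.ofReal (Real.exp (-(χ k) * |(m : ℝ) - (l1 (z - x) : ℝ)|)) :=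
            ENNReal.ofReal_le_ofReal (hbound k z m hm)
        _ ≤ ENNReal.ofReal (Real.exp (-χmin * (Nat.dist m (l1 (z - x)) : ℝ))) := by
            apply ENNReal.ofReal_le_ofReal
            apply Real.exp_le_exp.mpr
            rw [habs]
            exact mul_le_mul_of_nonneg_right (neg_le_neg (hχmin_le k)) (Nat.cast_nonneg _)
        _ = (r * r) ^ Nat.dist m (l1 (z - x)) := by
            rw [hrr, ← ENNReal.ofReal_pow (Real.exp_nonneg _), ← Real.exp_nat_mul]
            congr 1; ring
  -- constants
  set C0 : ℝ := 2 * (1 - e)⁻¹ with hC0_def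
  have hC0_pos : 0 < C0 := by
    have : 0 < 1 - e := by linarith
    positivity
  have hK : (2 : ℝ≥0∞) * (1 - r)⁻¹ = ENNReal.ofReal C0 := by
    rw [hC0_def, ENNReal.ofReal_mul (by norm_num : (0:ℝ) ≤ 2),
      ENNReal.ofReal_inv_of_pos (by linarith : (0:ℝ) < 1 - e),
      ENNReal.ofReal_sub 1 he_pos.le, ENNReal.ofReal_one]
    norm_num
    rw [hr_def]
  refine ⟨C0 ^ n, pow_pos hC0_pos n, a, ha, fun m => ?_⟩
  have hx0 : l1 (x - x) = 0 := by simp [l1]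
  have hprod_nonneg : ∀ (y : {y : Fin d → ℤ // l1 (y - x) = m}) (zs : Fin n → (Fin d → ℤ)),
      0 ≤ ∏ k : Fin (n + 1),
        q k ((Fin.snoc (Fin.cons x zs) (y : Fin d → ℤ) : Fin (n + 2) → (Fin d → ℤ)) k.castSucc)
            ((Fin.snoc (Fin.cons x zs) (y : Fin d → ℤ) : Fin (n + 2) → (Fin d → ℤ)) k.succ) :=
    fun y zs => Finset.prod_nonneg fun k _ => (hq01 k _ _).1
  have h1 : ENNReal.ofReal
      (∑' y : {y : Fin d → ℤ // l1 (y - x) = m}, ∑' zs : Fin n → (Fin d → ℤ),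
        ∏ k : Fin (n + 1),
          q k ((Fin.snoc (Fin.cons x zs) (y : Fin d → ℤ) : Fin (n + 2) → (Fin d → ℤ)) k.castSucc)
              ((Fin.snoc (Fin.cons x zs) (y : Fin d → ℤ) : Fin (n + 2) → (Fin d → ℤ)) k.succ))
      ≤ ∑' y : {y : Fin d → ℤ // l1 (y - x) = m}, ∑' zs : Fin n → (Fin d → ℤ),
        ∏ k : Fin (n + 1),
          ENNReal.ofReal (q k
            ((Fin.snoc (Fin.cons x zs) (y : Fin d → ℤ) : Fin (n + 2) → (Fin d → ℤ)) k.castSucc)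
            ((Fin.snoc (Fin.cons x zs) (y : Fin d → ℤ) : Fin (n + 2) → (Fin d → ℤ)) k.succ)) := by
    calc ENNReal.ofReal _
        ≤ ∑' y : {y : Fin d → ℤ // l1 (y - x) = m}, ENNReal.ofReal
            (∑' zs : Fin n → (Fin d → ℤ), ∏ k : Fin (n + 1),
              q k ((Fin.snoc (Fin.cons x zs) (y : Fin d → ℤ) :
                      Fin (n + 2) → (Fin d → ℤ)) k.castSucc)
                  ((Fin.snoc (Fin.cons x zs) (y : Fin d → ℤ) :
                      Fin (n + 2) → (Fin d → ℤ)) k.succ)) :=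
          stmt11_ofReal_tsum_le _ fun y => tsum_nonneg fun zs => hprod_nonneg y zs
      _ ≤ _ := by
          refine ENNReal.tsum_le_tsum fun y => ?_
          calc ENNReal.ofReal _
              ≤ ∑' zs : Fin n → (Fin d → ℤ), ENNReal.ofReal
                  (∏ k : Fin (n + 1),
                    q k ((Fin.snoc (Fin.cons x zs) (y : Fin d → ℤ) :
                            Fin (n + 2) → (Fin d → ℤ)) k.castSucc)
                        ((Fin.snoc (Fin.cons x zs) (y : Fin d → ℤ) :
                            Fin (n + 2) → (Fin d → ℤ)) k.succ)) :=
                stmt11_ofReal_tsum_le _ fun zs => hprod_nonneg y zs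
            _ = _ := by
                refine tsum_congr fun zs => ?_
                exact ENNReal.ofReal_prod_of_nonneg fun k _ => (hq01 k _ _).1
  have h2 := stmt11_main_ind x r hr1 n (fun k z y => ENNReal.ofReal (q k z y)) H x m
  rw [hx0, Nat.dist_zero_right] at h2
  have h3 : (2 * (1 - r)⁻¹) ^ n * r ^ m = ENNReal.ofReal (C0 ^ n * Real.exp (-a * (m : ℝ))) := by
    rw [hK, ← ENNReal.ofReal_pow hC0_pos.le, hr_def, ← ENNReal.ofReal_pow he_pos.le,
      ← ENNReal.ofReal_mul (pow_nonneg hC0_pos.le n)]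
    congr 2
    rw [he_def, ← Real.exp_nat_mul]
    congr 1; ring
  have h4 : ENNReal.ofReal
      (∑' y : {y : Fin d → ℤ // l1 (y - x) = m}, ∑' zs : Fin n → (Fin d → ℤ),
        ∏ k : Fin (n + 1),
          q k ((Fin.snoc (Fin.cons x zs) (y : Fin d → ℤ) : Fin (n + 2) → (Fin d → ℤ)) k.castSucc)
              ((Fin.snoc (Fin.cons x zs) (y : Fin d → ℤ) : Fin (n + 2) → (Fin d → ℤ)) k.succ))
      ≤ ENNReal.ofReal (C0 ^ n * Real.exp (-a * (m : ℝ))) := by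
    rw [← h3]
    exact h1.trans h2
  have hrhs : 0 ≤ C0 ^ n * Real.exp (-a * (m : ℝ)) := by positivity
  exact (ENNReal.ofReal_le_ofReal_iff hrhs).mp h4
end
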